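/- arXiv:0708.3457 — 16 statements merged into one kernel-verified Lean document; each statement's English description precedes it below -/
import Mathlib

section
/- Forward part of Theorem 1 (usual equivalence group of the class f(x)u_t=(g(x)u_x)_x+h(x)u^m). Let I be an open real interval, let f,g,h be smooth nonvanishing functions on I, let m be a real constant with m≠0 and m≠1, let δ0,δ1,δ3 be nonzero real constants with δ3>0 and let δ2 be real. Let φ: I → J be a smooth bijection onto an open interval J with φ'(x)≠0 for all x∈I. Define functions on J by f̃(φ(x)) = (δ0 δ1 / (δ3 φ'(x))) f(x), g̃(φ(x)) = (δ0 φ'(x)/δ3) g(x), h̃(φ(x)) = (δ0 / (δ3^m φ'(x))) h(x). If u: ℝ×I → (0,∞) is smooth and satisfies f(x) u_t(t,x) = ∂_x( g(x) u_x(t,x) ) + h(x) u(t,x)^m for all (t,x)∈ℝ×I, then the function ũ: ℝ×J → (0,∞) defined by ũ(δ1 t + δ2, φ(x)) = δ3 u(t,x) satisfies f̃(x̃) ũ_t̃(t̃,x̃) = ∂_x̃( g̃(x̃) ũ_x̃(t̃,x̃) ) + h̃(x̃) ũ(t̃,x̃)^m for all (t̃,x̃)∈ℝ×J. -/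
open Real Set Filter Topology

open scoped ContDiff

/-- Local inverse package for a smooth map with nonvanishing derivative. -/
lemma exists_local_inverse_pack {I : Set ℝ} (hI : IsOpen I) {φ : ℝ → ℝ}
    (hφ : ContDiffOn ℝ (⊤ : ℕ∞) φ I) {x : ℝ} (hx : x ∈ I) (hd : deriv φ x ≠ 0) :
    ∃ ρ : ℝ → ℝ, ρ (φ x) = x ∧ HasDerivAt ρ (deriv φ x)⁻¹ (φ x) ∧
      (∀ᶠ y in 𝓝 (φ x), DifferentiableAt ℝ ρ y) ∧
      (∀ᶠ y in 𝓝 (φ x), φ (ρ y) = y ∧ ρ y ∈ I) := by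
  have hφx : ContDiffAt ℝ ∞ φ x := (hφ.of_le (by simp)).contDiffAt (hI.mem_nhds hx)
  have h1n : (1 : WithTop ℕ∞) ≤ ∞ := by exact_mod_cast ((by simp) : (1 : ℕ∞) ≤ ⊤)
  have hsd : HasStrictDerivAt φ (deriv φ x) x := hφx.hasStrictDerivAt (by simp)
  have he : HasStrictFDerivAt φ
      ((ContinuousLinearEquiv.unitsEquivAut ℝ (Units.mk0 (deriv φ x) hd) :
        ℝ ≃L[ℝ] ℝ) : ℝ →L[ℝ] ℝ) x := hsd.hasStrictFDerivAt_equiv hd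
  refine ⟨hsd.localInverse φ (deriv φ x) x hd, he.localInverse_apply_image, ?_, ?_, ?_⟩
  · exact (hsd.to_localInverse hd).hasDerivAt
  · -- eventual differentiability from smoothness of the local inverse
    have hcd : ContDiffAt ℝ ∞ (hsd.localInverse φ (deriv φ x) x hd) (φ x) := by
      have := hφx.to_localInverse (f' :=
        ContinuousLinearEquiv.unitsEquivAut ℝ (Units.mk0 (deriv φ x) hd))
        he.hasFDerivAt (by simp)
      exact this
    obtain ⟨U, hU, hρU⟩ := hcd.contDiffOn (m := 1) h1n (by simp)
    have hint : interior U ∈ 𝓝 (φ x) := by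
      rw [mem_nhds_iff] at hU ⊢
      obtain ⟨V, hVU, hVo, hVx⟩ := hU
      exact ⟨V, hVo.subset_interior_iff.mpr hVU, hVo, hVx⟩
    filter_upwards [hint] with y hy
    exact ((hρU.mono interior_subset).differentiableOn one_ne_zero).differentiableAt
      (isOpen_interior.mem_nhds hy)
  · have h1 : ∀ᶠ y in 𝓝 (φ x), φ (hsd.localInverse φ (deriv φ x) x hd y) = y :=
      he.eventually_right_inverse
    have h2 : ∀ᶠ y in 𝓝 (φ x), hsd.localInverse φ (deriv φ x) x hd y ∈ I := by
      have hc : ContinuousAt (hsd.localInverse φ (deriv φ x) x hd) (φ x) :=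
        he.localInverse_continuousAt
      have happ : hsd.localInverse φ (deriv φ x) x hd (φ x) = x :=
        he.localInverse_apply_image
      have : I ∈ 𝓝 (hsd.localInverse φ (deriv φ x) x hd (φ x)) := by
        rw [happ]; exact hI.mem_nhds hx
      exact hc.eventually_mem this
    filter_upwards [h1, h2] with y hy1 hy2 using ⟨hy1, hy2⟩

/-- Forward part of Theorem 1 (usual equivalence group of the class
`f(x)u_t = (g(x)u_x)_x + h(x)u^m`). -/
theorem usual_equivalence_group_forward
    (I J : Set ℝ) (hI : IsOpen I) (hIc : I.OrdConnected)
    (hJ : IsOpen J) (hJc : J.OrdConnected)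
    (f g h : ℝ → ℝ) (m : ℝ)
    (hf : ContDiffOn ℝ (⊤ : ℕ∞) f I) (hg : ContDiffOn ℝ (⊤ : ℕ∞) g I) (hh : ContDiffOn ℝ (⊤ : ℕ∞) h I)
    (hf0 : ∀ x ∈ I, f x ≠ 0) (hg0 : ∀ x ∈ I, g x ≠ 0) (hh0 : ∀ x ∈ I, h x ≠ 0)
    (hm0 : m ≠ 0) (hm1 : m ≠ 1)
    (δ0 δ1 δ2 δ3 : ℝ) (hδ0 : δ0 ≠ 0) (hδ1 : δ1 ≠ 0) (hδ3 : 0 < δ3)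
    (φ : ℝ → ℝ) (hφ : ContDiffOn ℝ (⊤ : ℕ∞) φ I) (hφbij : BijOn φ I J)
    (hφ' : ∀ x ∈ I, deriv φ x ≠ 0)
    (ftil gtil htil : ℝ → ℝ)
    (hftil : ∀ x ∈ I, ftil (φ x) = δ0 * δ1 / (δ3 * deriv φ x) * f x)
    (hgtil : ∀ x ∈ I, gtil (φ x) = δ0 * deriv φ x / δ3 * g x)
    (hhtil : ∀ x ∈ I, htil (φ x) = δ0 / (δ3 ^ m * deriv φ x) * h x)
    (u : ℝ → ℝ → ℝ)
    (hu : ContDiffOn ℝ (⊤ : ℕ∞) (Function.uncurry u) (univ ×ˢ I))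
    (hupos : ∀ t : ℝ, ∀ x ∈ I, 0 < u t x)
    (hPDE : ∀ t : ℝ, ∀ x ∈ I,
      f x * deriv (fun s => u s x) t
        = deriv (fun y => g y * deriv (fun z => u t z) y) x + h x * u t x ^ m)
    (util : ℝ → ℝ → ℝ)
    (hutil : ∀ t : ℝ, ∀ x ∈ I, util (δ1 * t + δ2) (φ x) = δ3 * u t x) :
    ∀ ttil : ℝ, ∀ xtil ∈ J,
      0 < util ttil xtil ∧
      ftil xtil * deriv (fun s => util s xtil) ttil
        = deriv (fun y => gtil y * deriv (fun z => util ttil z) y) xtil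
          + htil xtil * util ttil xtil ^ m := by
  intro ttil xtil hxtil
  obtain ⟨x, hxI, hφx⟩ := hφbij.surjOn hxtil
  subst hφx
  have h1n : (1 : WithTop ℕ∞) ≤ ∞ := by exact_mod_cast ((by simp) : (1 : ℕ∞) ≤ ⊤)
  set t : ℝ := (ttil - δ2) / δ1 with ht
  have htt : δ1 * t + δ2 = ttil := by rw [ht]; field_simp; ring
  have huval : util ttil (φ x) = δ3 * u t x := by
    rw [← htt]; exact hutil t x hxI
  have hupos' : 0 < u t x := hupos t x hxI
  refine ⟨by rw [huval]; positivity, ?_⟩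
  -- notation
  set c : ℝ := deriv φ x with hc
  have hc0 : c ≠ 0 := hφ' x hxI
  -- u is smooth in x
  have huI : ContDiffOn ℝ ∞ (Function.uncurry u) (univ ×ˢ I) := hu.of_le (by simp)
  have hutx : ContDiffOn ℝ (⊤ : ℕ∞) (fun z => u t z) I := by
    have hin : ContDiffOn ℝ (⊤ : ℕ∞) (fun z : ℝ => ((t, z) : ℝ × ℝ)) I :=
      (contDiff_const.prodMk contDiff_id).contDiffOn
    exact hu.comp hin fun z hz => ⟨trivial, hz⟩
  -- time derivative of u
  have hud2 : DifferentiableAt ℝ (Function.uncurry u) (t, x) :=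
    (huI.contDiffAt ((isOpen_univ.prod hI).mem_nhds ⟨trivial, hxI⟩)).differentiableAt (by simp)
  have hutd : DifferentiableAt ℝ (fun s => u s x) t := by
    have : DifferentiableAt ℝ (fun s : ℝ => Function.uncurry u (s, x)) t :=
      by have := hud2.comp t ((differentiableAt_id (𝕜 := ℝ) (x := t)).prodMk (differentiableAt_const x)); exact this
    exact this
  set ut : ℝ := deriv (fun s => u s x) t with hut
  have hutD : HasDerivAt (fun s => u s x) ut t := hutd.hasDerivAt
  -- time derivative of util
  have htime : deriv (fun s => util s (φ x)) ttil = δ3 * (ut * δ1⁻¹) := by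
    have heq : (fun s => util s (φ x)) = fun s => δ3 * u ((s - δ2) / δ1) x := by
      funext s
      have h' := hutil ((s - δ2) / δ1) x hxI
      rwa [show δ1 * ((s - δ2) / δ1) + δ2 = s by field_simp; ring] at h'
    rw [heq]
    have h1 : HasDerivAt (fun s : ℝ => (s - δ2) / δ1) δ1⁻¹ ttil := by
      simpa [one_div] using ((hasDerivAt_id ttil).sub_const δ2).div_const δ1
    have h2 : HasDerivAt (fun s => u ((s - δ2) / δ1) x) (ut * δ1⁻¹) ttil := by
      have h3 : HasDerivAt (fun s => u s x) ut ((ttil - δ2) / δ1) := hutD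
      exact HasDerivAt.comp ttil h3 h1
    exact (h2.const_mul δ3).deriv
  -- local inverse of φ at x
  obtain ⟨ρ, hρx, hρd, hρdiff, hρev⟩ :=
    exists_local_inverse_pack hI hφ hxI hc0
  -- spatial derivative function of u
  have huxcd : ContDiffOn ℝ 1 (deriv (fun z => u t z)) I :=
    hutx.deriv_of_isOpen hI (WithTop.coe_le_coe.mpr le_top)
  have huxd : DifferentiableAt ℝ (deriv (fun z => u t z)) x :=
    ((huxcd.contDiffAt (hI.mem_nhds hxI)).differentiableAt one_ne_zero)
  have hgd : DifferentiableAt ℝ g x :=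
    (hg.contDiffAt (hI.mem_nhds hxI)).differentiableAt (by simp)
  have hinD : DifferentiableAt ℝ (fun y => g y * deriv (fun z => u t z) y) x :=
    hgd.mul huxd
  set D : ℝ := deriv (fun y => g y * deriv (fun z => u t z) y) x with hD
  have hhin : HasDerivAt (fun y => g y * deriv (fun z => u t z) y) D x := hinD.hasDerivAt
  -- eventual equality of util with δ3 * u t (ρ ·)
  have hEE : (fun z => util ttil z) =ᶠ[𝓝 (φ x)] fun z => δ3 * u t (ρ z) := by
    filter_upwards [hρev] with y hy
    have h' := hutil t (ρ y) hy.2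
    rw [hy.1, htt] at h'
    exact h'
  have hderivEE : deriv (fun z => util ttil z) =ᶠ[𝓝 (φ x)] deriv (fun z => δ3 * u t (ρ z)) :=
    hEE.deriv
  -- chain rule: deriv φ (ρ y) * deriv ρ y = 1 eventually
  have hchain : ∀ᶠ y in 𝓝 (φ x), deriv φ (ρ y) * deriv ρ y = 1 := by
    filter_upwards [hρev, hρdiff, hρev.eventually_nhds] with y hy hdiff hnb
    have hφd : HasDerivAt φ (deriv φ (ρ y)) (ρ y) :=
      (((hφ.of_le (by simp)).contDiffAt (hI.mem_nhds hy.2)).differentiableAt (one_ne_zero : (1 : WithTop ℕ∞) ≠ 0)).hasDerivAt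
    have hφρ : HasDerivAt (fun z => φ (ρ z)) (deriv φ (ρ y) * deriv ρ y) y :=
      HasDerivAt.comp y hφd hdiff.hasDerivAt
    have hid : HasDerivAt (fun z => φ (ρ z)) 1 y :=
      (hasDerivAt_id y).congr_of_eventuallyEq (hnb.mono fun z hz => hz.1)
    exact hφρ.unique hid
  -- eventual formula for deriv of the transplanted function
  have hderiv_inner : ∀ᶠ y in 𝓝 (φ x),
      deriv (fun z => δ3 * u t (ρ z)) y
        = δ3 * (deriv (fun z => u t z) (ρ y) * deriv ρ y) := by
    filter_upwards [hρev, hρdiff] with y hy hdiff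
    have hud : HasDerivAt (fun z => u t z) (deriv (fun z => u t z) (ρ y)) (ρ y) :=
      (((hutx.contDiffAt (hI.mem_nhds hy.2)).differentiableAt (by simp))).hasDerivAt
    exact ((HasDerivAt.comp y hud hdiff.hasDerivAt).const_mul δ3).deriv
  -- key eventual equality for the outer derivative
  have hkey : (fun y => gtil y * deriv (fun z => util ttil z) y)
      =ᶠ[𝓝 (φ x)] fun y => δ0 * (g (ρ y) * deriv (fun z => u t z) (ρ y)) := by
    filter_upwards [hρev, hderivEE, hderiv_inner, hchain] with y hy hd1 hd2 hcy
    have hgtil' : gtil y = δ0 * deriv φ (ρ y) / δ3 * g (ρ y) := by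
      conv_lhs => rw [← hy.1]
      exact hgtil (ρ y) hy.2
    rw [hd1, hd2, hgtil']
    field_simp
    linear_combination (g (ρ y) * deriv (fun z => u t z) (ρ y)) * hcy
  -- outer spatial derivative
  have houter : deriv (fun y => gtil y * deriv (fun z => util ttil z) y) (φ x)
      = δ0 * (D * c⁻¹) := by
    rw [hkey.deriv_eq]
    have hcomp : HasDerivAt (fun y => g (ρ y) * deriv (fun z => u t z) (ρ y))
        (D * c⁻¹) (φ x) := by
      have := HasDerivAt.comp (φ x) (hρx ▸ hhin) hρd
      simpa [hc, Function.comp_def] using this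
    exact (hcomp.const_mul δ0).deriv
  -- assemble
  have hPDEx : f x * ut = D + h x * u t x ^ m := hPDE t x hxI
  have hpow : (δ3 * u t x) ^ m = δ3 ^ m * u t x ^ m :=
    Real.mul_rpow hδ3.le hupos'.le
  have hδ3m : δ3 ^ m ≠ 0 := (Real.rpow_pos_of_pos hδ3 m).ne'
  rw [htime, houter, hftil x hxI, hhtil x hxI, huval, hpow, ← hc]
  field_simp
  linear_combination hPDEx
end

section
/- Forward part of Theorem 2 (generalized extended equivalence group of the class f(x)u_t=(g(x)u_x)_x+h(x)u^m). Let I be an open real interval, let f,g,h be smooth nonvanishing functions on I, let m be a real constant with m≠0 and m≠1, let δ0,δ1 be nonzero real constants and δ2 real. Let φ: I → J be a smooth bijection onto an open interval J with φ'(x)≠0 on I, and let ψ: I → (0,∞) be a smooth function satisfying the second-order ODE (g(x) ψ'(x) / ψ(x)²)' = 0 on I. Define functions on J by f̃(φ(x)) = (δ0 δ1 / (φ'(x) ψ(x)²)) f(x), g̃(φ(x)) = (δ0 φ'(x)/ψ(x)²) g(x), h̃(φ(x)) = (δ0 / (φ'(x) ψ(x)^{m+1})) h(x). If u: ℝ×I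 → (0,∞) is smooth and satisfies f(x) u_t = (g(x) u_x)_x + h(x) u^m on ℝ×I, then ũ: ℝ×J → (0,∞) defined by ũ(δ1 t + δ2, φ(x)) = ψ(x) u(t,x) satisfies f̃ ũ_t̃ = (g̃ ũ_x̃)_x̃ + h̃ ũ^m on ℝ×J. -/
open Real Set Filter Topology

/-- Pushforward of a derivative along a local diffeomorphism. -/
lemma deriv_push {I : Set ℝ} (hI : IsOpen I) {φ : ℝ → ℝ} (hφ : ContDiffOn ℝ (⊤ : ℕ∞) φ I)
    {x₀ : ℝ} (hx₀ : x₀ ∈ I) (hφ'0 : deriv φ x₀ ≠ 0)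
    {p q : ℝ → ℝ} {p' : ℝ} (hp : HasDerivAt p p' x₀)
    (hq : ∀ x ∈ I, q (φ x) = p x) :
    HasDerivAt q (p' / deriv φ x₀) (φ x₀) := by
  have hφs : HasStrictDerivAt φ (deriv φ x₀) x₀ :=
    (hφ.contDiffAt (hI.mem_nhds hx₀)).hasStrictDerivAt (by simp)
  set σ : ℝ → ℝ := hφs.localInverse φ (deriv φ x₀) x₀ hφ'0 with hσdef
  have hσF := hφs.hasStrictFDerivAt_equiv hφ'0
  have hσim : σ (φ x₀) = x₀ := hσF.localInverse_apply_image
  have hσc : ContinuousAt σ (φ x₀) := hσF.localInverse_continuousAt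
  have hmem : ∀ᶠ y in 𝓝 (φ x₀), σ y ∈ I := by
    have := hσc.eventually_mem (by rw [hσim] at *; exact hI.mem_nhds hx₀)
    simpa using this
  have hri : ∀ᶠ y in 𝓝 (φ x₀), φ (σ y) = y := hσF.eventually_right_inverse
  have hev : q =ᶠ[𝓝 (φ x₀)] fun y => p (σ y) := by
    filter_upwards [hmem, hri] with y h1 h2
    calc q y = q (φ (σ y)) := by rw [h2]
    _ = p (σ y) := hq _ h1
  have hσd : HasDerivAt σ (deriv φ x₀)⁻¹ (φ x₀) := (hφs.to_localInverse hφ'0).hasDerivAt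
  have hcomp : HasDerivAt (fun y => p (σ y)) (p' * (deriv φ x₀)⁻¹) (φ x₀) := by
    have hp' : HasDerivAt p p' (σ (φ x₀)) := by rw [hσim]; exact hp
    exact hp'.comp (φ x₀) hσd
  rw [div_eq_mul_inv]
  exact hcomp.congr_of_eventuallyEq hev


/-- Forward part of Theorem 2 (generalized extended equivalence group of the class
`f(x)u_t = (g(x)u_x)_x + h(x)u^m`). -/
theorem generalized_extended_equivalence_group_forward
    (I J : Set ℝ) (hI : IsOpen I) (hIc : I.OrdConnected)
    (hJ : IsOpen J) (hJc : J.OrdConnected)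
    (f g h : ℝ → ℝ) (m : ℝ)
    (hf : ContDiffOn ℝ (⊤ : ℕ∞) f I) (hg : ContDiffOn ℝ (⊤ : ℕ∞) g I) (hh : ContDiffOn ℝ (⊤ : ℕ∞) h I)
    (hf0 : ∀ x ∈ I, f x ≠ 0) (hg0 : ∀ x ∈ I, g x ≠ 0) (hh0 : ∀ x ∈ I, h x ≠ 0)
    (hm0 : m ≠ 0) (hm1 : m ≠ 1)
    (δ0 δ1 δ2 : ℝ) (hδ0 : δ0 ≠ 0) (hδ1 : δ1 ≠ 0)
    (φ : ℝ → ℝ) (hφ : ContDiffOn ℝ (⊤ : ℕ∞) φ I) (hφbij : BijOn φ I J)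
    (hφ' : ∀ x ∈ I, deriv φ x ≠ 0)
    (ψ : ℝ → ℝ) (hψ : ContDiffOn ℝ (⊤ : ℕ∞) ψ I) (hψpos : ∀ x ∈ I, 0 < ψ x)
    (hψODE : ∀ x ∈ I, deriv (fun y => g y * deriv ψ y / ψ y ^ 2) x = 0)
    (ftil gtil htil : ℝ → ℝ)
    (hftil : ∀ x ∈ I, ftil (φ x) = δ0 * δ1 / (deriv φ x * ψ x ^ 2) * f x)
    (hgtil : ∀ x ∈ I, gtil (φ x) = δ0 * deriv φ x / ψ x ^ 2 * g x)
    (hhtil : ∀ x ∈ I, htil (φ x) = δ0 / (deriv φ x * ψ x ^ (m + 1)) * h x)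
    (u : ℝ → ℝ → ℝ)
    (hu : ContDiffOn ℝ (⊤ : ℕ∞) (Function.uncurry u) (univ ×ˢ I))
    (hupos : ∀ t : ℝ, ∀ x ∈ I, 0 < u t x)
    (hPDE : ∀ t : ℝ, ∀ x ∈ I,
      f x * deriv (fun s => u s x) t
        = deriv (fun y => g y * deriv (fun z => u t z) y) x + h x * u t x ^ m)
    (util : ℝ → ℝ → ℝ)
    (hutil : ∀ t : ℝ, ∀ x ∈ I, util (δ1 * t + δ2) (φ x) = ψ x * u t x) :
    ∀ ttil : ℝ, ∀ xtil ∈ J,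
      0 < util ttil xtil ∧
      ftil xtil * deriv (fun s => util s xtil) ttil
        = deriv (fun y => gtil y * deriv (fun z => util ttil z) y) xtil
          + htil xtil * util ttil xtil ^ m := by
  intro ttil xtil hxtil
  obtain ⟨x₀, hx₀, rfl⟩ := hφbij.surjOn hxtil
  set t₀ : ℝ := (ttil - δ2) / δ1 with ht₀def
  have ht₀ : δ1 * t₀ + δ2 = ttil := by rw [ht₀def]; field_simp; ring
  have hutil' : ∀ x ∈ I, util ttil (φ x) = ψ x * u t₀ x := by
    intro x hx; rw [← ht₀]; exact hutil t₀ x hx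
  -- smoothness of v := u t₀ ·
  have hvI : ContDiffOn ℝ (⊤ : ℕ∞) (fun z => u t₀ z) I := by
    have : ContDiffOn ℝ (⊤ : ℕ∞) (Function.uncurry u ∘ fun z => (t₀, z)) I :=
      hu.comp ((contDiff_const.prodMk contDiff_id).contDiffOn)
        (fun x hx => ⟨mem_univ _, hx⟩)
    exact this
  have hv'I : ContDiffOn ℝ (⊤ : ℕ∞) (deriv (fun z => u t₀ z)) I := hvI.deriv_of_isOpen hI (by simp)
  -- pointwise derivative facts
  have hψd : ∀ x ∈ I, HasDerivAt ψ (deriv ψ x) x := fun x hx =>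
    ((hψ.contDiffAt (hI.mem_nhds hx)).differentiableAt (by simp)).hasDerivAt
  have hgd : ∀ x ∈ I, HasDerivAt g (deriv g x) x := fun x hx =>
    ((hg.contDiffAt (hI.mem_nhds hx)).differentiableAt (by simp)).hasDerivAt
  have hvd : ∀ x ∈ I, HasDerivAt (fun z => u t₀ z) (deriv (fun z => u t₀ z) x) x := fun x hx =>
    ((hvI.contDiffAt (hI.mem_nhds hx)).differentiableAt (by simp)).hasDerivAt
  have hv'd : ∀ x ∈ I, DifferentiableAt ℝ (deriv (fun z => u t₀ z)) x := fun x hx =>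
    (hv'I.contDiffAt (hI.mem_nhds hx)).differentiableAt (by simp)
  have hψ0 : ∀ x ∈ I, ψ x ≠ 0 := fun x hx => (hψpos x hx).ne'
  -- space derivative of util ttil at each φ x
  have hU1 : ∀ x ∈ I, HasDerivAt (fun z => util ttil z)
      ((deriv ψ x * u t₀ x + ψ x * deriv (fun z => u t₀ z) x) / deriv φ x) (φ x) := by
    intro x hx
    exact deriv_push hI hφ hx (hφ' x hx) ((hψd x hx).mul (hvd x hx)) hutil'
  -- the transported flux expression
  have hHK : ∀ x ∈ I, gtil (φ x) * deriv (fun z => util ttil z) (φ x)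
      = δ0 * g x * (deriv ψ x * u t₀ x + ψ x * deriv (fun z => u t₀ z) x) / ψ x ^ 2 := by
    intro x hx
    rw [(hU1 x hx).deriv, hgtil x hx]
    field_simp [hφ' x hx, hψ0 x hx]
  -- derivative of the transported flux
  have hAdiff : DifferentiableAt ℝ (fun y => g y * deriv ψ y / ψ y ^ 2) x₀ := by
    have hψ'd : DifferentiableAt ℝ (deriv ψ) x₀ :=
      ((hψ.deriv_of_isOpen hI (by simp) : ContDiffOn ℝ (⊤ : ℕ∞) (deriv ψ) I).contDiffAt (hI.mem_nhds hx₀)).differentiableAt (by simp)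
    exact ((hgd x₀ hx₀).differentiableAt.mul hψ'd).div
      (((hψd x₀ hx₀).differentiableAt).pow 2) (pow_ne_zero 2 (hψ0 x₀ hx₀))
  have hA : HasDerivAt (fun y => g y * deriv ψ y / ψ y ^ 2) 0 x₀ := by
    have := hAdiff.hasDerivAt
    rwa [hψODE x₀ hx₀] at this
  have hB : HasDerivAt (fun y => g y * deriv (fun z => u t₀ z) y)
      (deriv (fun y => g y * deriv (fun z => u t₀ z) y) x₀) x₀ :=
    ((hgd x₀ hx₀).differentiableAt.mul (hv'd x₀ hx₀)).hasDerivAt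
  have hK : HasDerivAt
      (fun x => δ0 * g x * (deriv ψ x * u t₀ x + ψ x * deriv (fun z => u t₀ z) x) / ψ x ^ 2)
      (δ0 * deriv (fun y => g y * deriv (fun z => u t₀ z) y) x₀ / ψ x₀) x₀ := by
    have hR : HasDerivAt
        (fun x => δ0 * ((g x * deriv ψ x / ψ x ^ 2) * u t₀ x
          + (g x * deriv (fun z => u t₀ z) x) / ψ x))
        (δ0 * ((0 * u t₀ x₀ + (g x₀ * deriv ψ x₀ / ψ x₀ ^ 2) * deriv (fun z => u t₀ z) x₀)
          + (deriv (fun y => g y * deriv (fun z => u t₀ z) y) x₀ * ψ x₀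
            - (g x₀ * deriv (fun z => u t₀ z) x₀) * deriv ψ x₀) / ψ x₀ ^ 2)) x₀ :=
      (((hA.mul (hvd x₀ hx₀)).add (hB.div (hψd x₀ hx₀) (hψ0 x₀ hx₀))).const_mul δ0)
    have hev : (fun x => δ0 * g x * (deriv ψ x * u t₀ x + ψ x * deriv (fun z => u t₀ z) x) / ψ x ^ 2)
        =ᶠ[𝓝 x₀] (fun x => δ0 * ((g x * deriv ψ x / ψ x ^ 2) * u t₀ x
          + (g x * deriv (fun z => u t₀ z) x) / ψ x)) := by
      filter_upwards [hI.mem_nhds hx₀] with x hx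
      field_simp [hψ0 x hx]
    have := hR.congr_of_eventuallyEq hev
    refine this.congr_deriv ?_
    field_simp [hψ0 x₀ hx₀]
    ring
  have hU2 : HasDerivAt (fun y => gtil y * deriv (fun z => util ttil z) y)
      (δ0 * deriv (fun y => g y * deriv (fun z => u t₀ z) y) x₀ / ψ x₀ / deriv φ x₀) (φ x₀) :=
    deriv_push hI hφ hx₀ (hφ' x₀ hx₀) hK hHK
  -- time derivative
  have hFt : ∀ s : ℝ, util s (φ x₀) = ψ x₀ * u ((s - δ2) / δ1) x₀ := by
    intro s
    have := hutil ((s - δ2) / δ1) x₀ hx₀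
    rwa [show δ1 * ((s - δ2) / δ1) + δ2 = s by field_simp; ring] at this
  have hud : HasDerivAt (fun s => u s x₀) (deriv (fun s => u s x₀) t₀) t₀ := by
    have : ContDiffAt ℝ (⊤ : ℕ∞) (Function.uncurry u ∘ fun s => (s, x₀)) t₀ :=
      (hu.contDiffAt ((isOpen_univ.prod hI).mem_nhds ⟨mem_univ _, hx₀⟩)).comp t₀
        (contDiff_id.prodMk contDiff_const).contDiffAt
    exact (this.differentiableAt (by simp)).hasDerivAt
  have hF : HasDerivAt (fun s => util s (φ x₀))
      (ψ x₀ * (deriv (fun s => u s x₀) t₀ * (1 / δ1))) ttil := by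
    have hinner : HasDerivAt (fun s : ℝ => (s - δ2) / δ1) (1 / δ1) ttil :=
      ((hasDerivAt_id ttil).sub_const δ2).div_const δ1
    have hcomp : HasDerivAt (fun s => u ((s - δ2) / δ1) x₀)
        (deriv (fun s => u s x₀) t₀ * (1 / δ1)) ttil := by have := hud.comp ttil hinner; exact this
    have := hcomp.const_mul (ψ x₀)
    refine this.congr_of_eventuallyEq ?_
    exact Filter.Eventually.of_forall hFt
  -- assemble
  refine ⟨?_, ?_⟩
  · rw [hutil' x₀ hx₀]
    exact mul_pos (hψpos x₀ hx₀) (hupos t₀ x₀ hx₀)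
  · rw [hF.deriv, hU2.deriv, hftil x₀ hx₀, hhtil x₀ hx₀, hutil' x₀ hx₀]
    have key := hPDE t₀ x₀ hx₀
    rw [show deriv (fun y => g y * deriv (fun z => u t₀ z) y) x₀
        = f x₀ * deriv (fun s => u s x₀) t₀ - h x₀ * u t₀ x₀ ^ m by linarith [key]]
    rw [Real.mul_rpow (hψpos x₀ hx₀).le (hupos t₀ x₀ hx₀).le,
      show m + 1 = m + (1:ℝ) from rfl, Real.rpow_add (hψpos x₀ hx₀), Real.rpow_one]
    have hψm : ψ x₀ ^ m ≠ 0 := (Real.rpow_pos_of_pos (hψpos x₀ hx₀) m).ne'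
    field_simp [hφ' x₀ hx₀, hψ0 x₀ hx₀, hψm]
    ring
end

section
/- Forward part of Theorem 5 (conditional equivalence group for m=2 of the class f(x)u_t=(f(x)u_x)_x+h(x)u²). Let I be an open real interval, let f,h be smooth nonvanishing functions on I, let δ0,δ1 be nonzero real constants and δ2,δ3 real. Let ψ: I → ℝ be a smooth nonvanishing solution of the fourth-order nonlinear ODE [ (f/ψ²) · ( (ψ²/(2h)) · ( f ψ'/ψ² )' )' ]' = (ψ/(4h)) · [ ( f ψ'/ψ² )' ]² on I, and set χ(x) = −(ψ(x)²/(2h(x))) · ( f ψ'/ψ² )'(x). Define functions on the interval δ1·I+δ3 by f̃(δ1 x + δ3) = (δ0 δ1/ψ(x)²) f(x) and h̃(δ1 x + δ3) = (δ0/(δ1 ψ(x)³)) h(x). If u: ℝ×I → ℝ is smooth and satisfies f(x) u_t = (f(x) u_x)_x + h(x) u² on ℝ×I, then the function ũ defined by ũ(δ1² t + δ2, δ1 x + δ3) = ψ(x) u(t,x) + χ(x) satisfies f̃ ũ_t̃ = (f̃ ũ_x̃)_x̃ + h̃ ũ² on ℝ×(δ1·I+δ3). -/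
open Real Set

lemma aux_deriv_smooth {s : Set ℝ} (hs : IsOpen s) {g : ℝ → ℝ}
    (hg : ContDiffOn ℝ (⊤:ℕ∞) g s) : ContDiffOn ℝ (⊤:ℕ∞) (deriv g) s :=
  hg.deriv_of_isOpen hs (by exact_mod_cast le_top)

lemma aux_diffAt {s : Set ℝ} (hs : IsOpen s) {g : ℝ → ℝ}
    (hg : ContDiffOn ℝ (⊤:ℕ∞) g s) {x : ℝ} (hx : x ∈ s) : DifferentiableAt ℝ g x :=
  (hg.contDiffAt (hs.mem_nhds hx)).differentiableAt (by simp)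

/-- Forward part of Theorem 5 (conditional equivalence group for `m = 2` of the
class `f(x)u_t = (f(x)u_x)_x + h(x)u²`). -/
theorem conditional_equivalence_group_m2_forward
    (I : Set ℝ) (hI : IsOpen I) (hIc : I.OrdConnected)
    (f h : ℝ → ℝ)
    (hf : ContDiffOn ℝ (⊤ : ℕ∞) f I) (hh : ContDiffOn ℝ (⊤ : ℕ∞) h I)
    (hf0 : ∀ x ∈ I, f x ≠ 0) (hh0 : ∀ x ∈ I, h x ≠ 0)
    (δ0 δ1 δ2 δ3 : ℝ) (hδ0 : δ0 ≠ 0) (hδ1 : δ1 ≠ 0)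
    (ψ : ℝ → ℝ) (hψ : ContDiffOn ℝ (⊤ : ℕ∞) ψ I) (hψ0 : ∀ x ∈ I, ψ x ≠ 0)
    (hψODE : ∀ x ∈ I,
      deriv (fun y => f y / ψ y ^ 2 *
          deriv (fun z => ψ z ^ 2 / (2 * h z) *
            deriv (fun w => f w * deriv ψ w / ψ w ^ 2) z) y) x
        = ψ x / (4 * h x) * (deriv (fun w => f w * deriv ψ w / ψ w ^ 2) x) ^ 2)
    (χ : ℝ → ℝ)
    (hχ : ∀ x ∈ I,
      χ x = -(ψ x ^ 2 / (2 * h x)) * deriv (fun w => f w * deriv ψ w / ψ w ^ 2) x)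
    (ftil htil : ℝ → ℝ)
    (hftil : ∀ x ∈ I, ftil (δ1 * x + δ3) = δ0 * δ1 / ψ x ^ 2 * f x)
    (hhtil : ∀ x ∈ I, htil (δ1 * x + δ3) = δ0 / (δ1 * ψ x ^ 3) * h x)
    (u : ℝ → ℝ → ℝ)
    (hu : ContDiffOn ℝ (⊤ : ℕ∞) (Function.uncurry u) (univ ×ˢ I))
    (hPDE : ∀ t : ℝ, ∀ x ∈ I,
      f x * deriv (fun s => u s x) t
        = deriv (fun y => f y * deriv (fun z => u t z) y) x + h x * u t x ^ 2)
    (util : ℝ → ℝ → ℝ)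
    (hutil : ∀ t : ℝ, ∀ x ∈ I,
      util (δ1 ^ 2 * t + δ2) (δ1 * x + δ3) = ψ x * u t x + χ x) :
    ∀ ttil : ℝ, ∀ xtil ∈ (fun x => δ1 * x + δ3) '' I,
      ftil xtil * deriv (fun s => util s xtil) ttil
        = deriv (fun y => ftil y * deriv (fun z => util ttil z) y) xtil
          + htil xtil * util ttil xtil ^ 2 := by
  intro ttil xtil hxtil
  obtain ⟨x, hx, hxeq⟩ := hxtil
  simp only at hxeq
  set t : ℝ := (ttil - δ2) / δ1 ^ 2 with ht
  have hδ1sq : δ1 ^ 2 ≠ 0 := pow_ne_zero _ hδ1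
  have httil : δ1 ^ 2 * t + δ2 = ttil := by rw [ht]; field_simp; ring
  -- smoothness downgrades
  have hfS : ContDiffOn ℝ (⊤:ℕ∞) f I := hf.of_le (by simp)
  have hhS : ContDiffOn ℝ (⊤:ℕ∞) h I := hh.of_le (by simp)
  have hψS : ContDiffOn ℝ (⊤:ℕ∞) ψ I := hψ.of_le (by simp)
  have huS : ContDiffOn ℝ (⊤:ℕ∞) (Function.uncurry u) (univ ×ˢ I) := hu.of_le (by simp)
  -- names
  set P := fun w => f w * deriv ψ w / ψ w ^ 2 with hPdef
  set Q := fun z => ψ z ^ 2 / (2 * h z) * deriv P z with hQdef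
  set R := fun y => f y / ψ y ^ 2 * deriv Q y with hRdef
  have hψsq : ∀ y ∈ I, ψ y ^ 2 ≠ 0 := fun y hy => pow_ne_zero _ (hψ0 y hy)
  have h2h : ∀ y ∈ I, 2 * h y ≠ 0 := fun y hy =>
    mul_ne_zero two_ne_zero (hh0 y hy)
  -- smoothness of named functions
  have hψ'S : ContDiffOn ℝ (⊤:ℕ∞) (deriv ψ) I := aux_deriv_smooth hI hψS
  have hPS : ContDiffOn ℝ (⊤:ℕ∞) P I := (hfS.mul hψ'S).div (hψS.pow 2) hψsq
  have hP'S : ContDiffOn ℝ (⊤:ℕ∞) (deriv P) I := aux_deriv_smooth hI hPS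
  have hQS : ContDiffOn ℝ (⊤:ℕ∞) Q I :=
    ((hψS.pow 2).div (contDiffOn_const.mul hhS) h2h).mul hP'S
  have hQ'S : ContDiffOn ℝ (⊤:ℕ∞) (deriv Q) I := aux_deriv_smooth hI hQS
  have hRS : ContDiffOn ℝ (⊤:ℕ∞) R I := (hfS.div (hψS.pow 2) hψsq).mul hQ'S
  -- smoothness of the slice z ↦ u t z
  have hUS : ContDiffOn ℝ (⊤:ℕ∞) (fun z => u t z) I :=
    by have := huS.comp (s := I) (f := fun z => (t, z)) (contDiffOn_const.prodMk contDiffOn_id) (fun z hz => ⟨mem_univ _, hz⟩); exact this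
  have hU'S : ContDiffOn ℝ (⊤:ℕ∞) (deriv (fun z => u t z)) I := aux_deriv_smooth hI hUS
  -- time differentiability at (t, x)
  have hTimeDiff : DifferentiableAt ℝ (fun τ => u τ x) t := by
    have hC : ContDiffAt ℝ (⊤:ℕ∞) (Function.uncurry u) (t, x) :=
      huS.contDiffAt ((isOpen_univ.prod hI).mem_nhds ⟨mem_univ _, hx⟩)
    have : ContDiffAt ℝ (⊤:ℕ∞) (fun τ => u τ x) t :=
      hC.comp t (contDiffAt_id.prodMk contDiffAt_const)
    exact this.differentiableAt (by simp)
  -- χ equals -Q on I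
  have hχQ : ∀ y ∈ I, χ y = -Q y := fun y hy => by
    rw [hχ y hy, hQdef]; ring
  -- the transformed dependent variable as a function of x
  set V := fun z => ψ z * u t z + χ z with hVdef
  have hVev : ∀ y ∈ I, V =ᶠ[nhds y] fun z => ψ z * u t z - Q z := by
    intro y hy
    filter_upwards [hI.mem_nhds hy] with z hz
    rw [hVdef]; simp only; rw [hχQ z hz]; ring
  have hVdiff : ∀ y ∈ I, DifferentiableAt ℝ V y := fun y hy =>
    (((aux_diffAt hI hψS hy).mul (aux_diffAt hI hUS hy)).sub
      (aux_diffAt hI hQS hy)).congr_of_eventuallyEq (hVev y hy)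
  have hVderiv : ∀ y ∈ I, deriv V y
      = deriv ψ y * u t y + ψ y * deriv (fun z => u t z) y - deriv Q y := by
    intro y hy
    rw [(hVev y hy).deriv_eq,
      deriv_fun_sub (f := fun z => ψ z * u t z) ((aux_diffAt hI hψS hy).mul (aux_diffAt hI hUS hy)) (aux_diffAt hI hQS hy),
      deriv_fun_mul (aux_diffAt hI hψS hy) (aux_diffAt hI hUS hy)]
  -- the key inner function T
  set T := fun z => f z * deriv V z / ψ z ^ 2 with hTdef
  have hTev : T =ᶠ[nhds x] fun y =>
      (P y * u t y + f y * deriv (fun z => u t z) y / ψ y) - R y := by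
    filter_upwards [hI.mem_nhds hx] with y hy
    rw [hTdef]; simp only
    rw [hVderiv y hy, hPdef, hRdef]; simp only
    have := hψ0 y hy
    field_simp
  have hAdiff : DifferentiableAt ℝ (fun y => P y * u t y) x :=
    (aux_diffAt hI hPS hx).mul (aux_diffAt hI hUS hx)
  have hBdiff : DifferentiableAt ℝ
      (fun y => f y * deriv (fun z => u t z) y / ψ y) x :=
    ((aux_diffAt hI hfS hx).mul (aux_diffAt hI hU'S hx)).div
      (aux_diffAt hI hψS hx) (hψ0 x hx)
  have hTdiff : DifferentiableAt ℝ T x :=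
    ((hAdiff.add hBdiff).sub (aux_diffAt hI hRS hx)).congr_of_eventuallyEq hTev
  have hTderiv : deriv T x
      = (deriv P x * u t x + P x * deriv (fun z => u t z) x)
        + (deriv (fun y => f y * deriv (fun z => u t z) y) x * ψ x
            - f x * deriv (fun z => u t z) x * deriv ψ x) / ψ x ^ 2
        - ψ x / (4 * h x) * (deriv P x) ^ 2 := by
    rw [hTev.deriv_eq, deriv_fun_sub (f := fun y => P y * u t y + f y * deriv (fun z => u t z) y / ψ y) (hAdiff.add hBdiff) (aux_diffAt hI hRS hx),
      deriv_fun_add hAdiff hBdiff,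
      deriv_fun_mul (aux_diffAt hI hPS hx) (aux_diffAt hI hUS hx),
      deriv_fun_div (c := fun y => f y * deriv (fun z => u t z) y) ((aux_diffAt hI hfS hx).mul (aux_diffAt hI hU'S hx))
        (aux_diffAt hI hψS hx) (hψ0 x hx)]
    rw [hψODE x hx]
  -- the image set J and the inverse affine map σ
  set σ := fun y : ℝ => (y - δ3) / δ1 with hσdef
  have hσmem : ∀ y : ℝ, σ y ∈ I → δ1 * σ y + δ3 = y := by
    intro y _; rw [hσdef]; field_simp; ring
  have hJeq : ((fun x => δ1 * x + δ3) '' I) = σ ⁻¹' I := by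
    ext y
    constructor
    · rintro ⟨a, ha, rfl⟩
      have : σ (δ1 * a + δ3) = a := by rw [hσdef]; field_simp; ring
      simpa [this] using ha
    · intro hy
      exact ⟨σ y, hy, by rw [hσdef]; field_simp; ring⟩
  have hJopen : IsOpen ((fun x => δ1 * x + δ3) '' I) := by
    rw [hJeq]
    exact hI.preimage ((continuous_id.sub continuous_const).div_const _)
  have hxtilJ : xtil ∈ (fun x => δ1 * x + δ3) '' I := ⟨x, hx, hxeq⟩
  have hσx : σ xtil = x := by rw [hσdef, ← hxeq]; field_simp; ring
  have hσderiv : ∀ y : ℝ, deriv σ y = 1 / δ1 := by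
    intro y
    rw [hσdef]
    rw [deriv_div_const, deriv_sub_const, deriv_id'']
  have hσdiff : ∀ y : ℝ, DifferentiableAt ℝ σ y := fun y =>
    (differentiableAt_id.sub (differentiableAt_const _)).div_const _
  -- spatial derivative of util
  have hWderiv : ∀ y ∈ (fun x => δ1 * x + δ3) '' I,
      deriv (fun z => util ttil z) y = deriv V (σ y) * (1 / δ1) := by
    intro y hy
    rw [hJeq] at hy
    have hev : (fun z => util ttil z) =ᶠ[nhds y] fun z => V (σ z) := by
      have : σ ⁻¹' I ∈ nhds y :=
        (hI.preimage ((continuous_id.sub continuous_const).div_const _)).mem_nhds hy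
      filter_upwards [this] with z hz
      have h1 := hutil t (σ z) hz
      rw [httil, hσmem z hz] at h1
      rw [h1, hVdef]
    rw [hev.deriv_eq]
    have : (fun z => V (σ z)) = V ∘ σ := rfl
    rw [this, deriv_comp y (hVdiff (σ y) hy) (hσdiff y), hσderiv y]
  -- the outer spatial derivative
  have hOuter : deriv (fun y => ftil y * deriv (fun z => util ttil z) y) xtil
      = δ0 * (deriv T x * (1 / δ1)) := by
    have hev : (fun y => ftil y * deriv (fun z => util ttil z) y)
        =ᶠ[nhds xtil] fun y => δ0 * T (σ y) := by
      filter_upwards [hJopen.mem_nhds hxtilJ] with y hy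
      have hyI : σ y ∈ I := by rw [hJeq] at hy; exact hy
      have h1 : ftil y = δ0 * δ1 / ψ (σ y) ^ 2 * f (σ y) := by
        have := hftil (σ y) hyI
        rwa [hσmem y hyI] at this
      rw [h1, hWderiv y hy, hTdef]
      simp only
      have := hψ0 (σ y) hyI
      field_simp
    rw [hev.deriv_eq]
    have hcomp : (fun y => T (σ y)) = T ∘ σ := rfl
    have hTσdiff : DifferentiableAt ℝ (fun y => T (σ y)) xtil := by
      rw [hcomp]
      exact (hσx ▸ hTdiff : DifferentiableAt ℝ T (σ xtil)).comp xtil (hσdiff xtil)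
    rw [deriv_const_mul δ0 hTσdiff, hcomp,
      deriv_comp xtil (hσx ▸ hTdiff) (hσdiff xtil), hσderiv, hσx]
  -- time derivative of util
  have hTime : deriv (fun s => util s xtil) ttil
      = ψ x * (deriv (fun s => u s x) t * (1 / δ1 ^ 2)) := by
    have hfunt : (fun s => util s xtil) = fun s => ψ x * u ((s - δ2) / δ1 ^ 2) x + χ x := by
      funext s
      have h1 : δ1 ^ 2 * ((s - δ2) / δ1 ^ 2) + δ2 = s := by field_simp; ring
      have h2 := hutil ((s - δ2) / δ1 ^ 2) x hx
      rw [h1, hxeq] at h2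
      exact h2
    rw [hfunt]
    have hcomp : (fun s => u ((s - δ2) / δ1 ^ 2) x)
        = (fun τ => u τ x) ∘ (fun s => (s - δ2) / δ1 ^ 2) := rfl
    have haffdiff : DifferentiableAt ℝ (fun s : ℝ => (s - δ2) / δ1 ^ 2) ttil :=
      (differentiableAt_id.sub (differentiableAt_const _)).div_const _
    have haffder : deriv (fun s : ℝ => (s - δ2) / δ1 ^ 2) ttil = 1 / δ1 ^ 2 := by
      rw [deriv_div_const, deriv_sub_const, deriv_id'']
    have hival : (ttil - δ2) / δ1 ^ 2 = t := ht.symm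
    have hinnerdiff : DifferentiableAt ℝ (fun s => u ((s - δ2) / δ1 ^ 2) x) ttil := by
      rw [hcomp]
      exact (hival ▸ hTimeDiff : DifferentiableAt ℝ (fun τ => u τ x) ((ttil - δ2)/δ1^2)).comp
        ttil haffdiff
    rw [deriv_add_const, deriv_const_mul _ hinnerdiff, hcomp,
      deriv_comp ttil (hival ▸ hTimeDiff) haffdiff, haffder, hival]
  -- pointwise values
  have hftilv : ftil xtil = δ0 * δ1 / ψ x ^ 2 * f x := by rw [← hxeq]; exact hftil x hx
  have hhtilv : htil xtil = δ0 / (δ1 * ψ x ^ 3) * h x := by rw [← hxeq]; exact hhtil x hx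
  have hutilv : util ttil xtil = ψ x * u t x + χ x := by
    have h2 := hutil t x hx
    rw [httil, hxeq] at h2
    exact h2
  -- PDE at (t, x)
  have hD := hPDE t x hx
  -- assemble
  rw [hTime, hOuter, hftilv, hhtilv, hutilv, hTderiv, hχ x hx]
  have hDval : deriv (fun y => f y * deriv (fun z => u t z) y) x
      = f x * deriv (fun s => u s x) t - h x * u t x ^ 2 := by linarith [hD]
  rw [hDval, hPdef]
  simp only
  have h1 := hψ0 x hx
  have h2 := hh0 x hx
  field_simp
  ring
end

section
/- Forward part of Theorem 8 (generalized extended equivalence group of the class v_t=v_{xx}+H(x)v²+F(x)v). Let H, F be smooth functions on ℝ with H nonvanishing, let δ1, δ4 be nonzero real constants and δ2, δ3 real, and let χ: ℝ → ℝ be a twice differentiable solution of χ''(x) = δ4^{-1} H(x) χ(x)² − F(x) χ(x) on ℝ. If v: ℝ×ℝ → ℝ is smooth and satisfies v_t = v_{xx} + H(x) v² + F(x) v on ℝ×ℝ, then the function ṽ defined by ṽ(δ1² t + δ2, δ1 x + δ3) = δ4 v(t,x) + χ(x) satisfies ṽ_t̃ = ṽ_x̃x̃ + H̃(x̃) ṽ²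 + F̃(x̃) ṽ on ℝ×ℝ, where H̃(δ1 x + δ3) = H(x)/(δ1² δ4) and F̃(δ1 x + δ3) = F(x)/δ1² − 2H(x)χ(x)/(δ1² δ4). -/
open Real Set


lemma deriv_comp_affine (f : ℝ → ℝ) (c d y : ℝ)
    (hf : DifferentiableAt ℝ f ((y - c) / d)) :
    deriv (fun z => f ((z - c) / d)) y = deriv f ((y - c) / d) / d := by
  have h1 : DifferentiableAt ℝ (fun z : ℝ => (z - c) / d) y := by fun_prop
  rw [show (fun z => f ((z - c) / d)) = f ∘ (fun z : ℝ => (z - c) / d) from rfl,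
    deriv_comp y hf h1]
  have : deriv (fun z : ℝ => (z - c) / d) y = 1 / d := by
    rw [deriv_div_const]
    simp
  rw [this]
  ring

/-- Forward part of Theorem 8 (generalized extended equivalence group of the class
`v_t = v_{xx} + H(x)v² + F(x)v`). -/
theorem imaged_class_m2_equivalence_group_forward
    (H F : ℝ → ℝ) (hH : ContDiff ℝ (⊤ : ℕ∞) H) (hF : ContDiff ℝ (⊤ : ℕ∞) F)
    (hH0 : ∀ x : ℝ, H x ≠ 0)
    (δ1 δ2 δ3 δ4 : ℝ) (hδ1 : δ1 ≠ 0) (hδ4 : δ4 ≠ 0)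
    (χ : ℝ → ℝ) (hχd : Differentiable ℝ χ) (hχd2 : Differentiable ℝ (deriv χ))
    (hχODE : ∀ x : ℝ, deriv (deriv χ) x = δ4⁻¹ * H x * χ x ^ 2 - F x * χ x)
    (v : ℝ → ℝ → ℝ) (hv : ContDiff ℝ (⊤ : ℕ∞) (Function.uncurry v))
    (hPDE : ∀ t x : ℝ,
      deriv (fun s => v s x) t
        = deriv (fun y => deriv (fun z => v t z) y) x + H x * v t x ^ 2 + F x * v t x)
    (vtil : ℝ → ℝ → ℝ) (Htil Ftil : ℝ → ℝ)
    (hvtil : ∀ t x : ℝ, vtil (δ1 ^ 2 * t + δ2) (δ1 * x + δ3) = δ4 * v t x + χ x)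
    (hHtil : ∀ x : ℝ, Htil (δ1 * x + δ3) = H x / (δ1 ^ 2 * δ4))
    (hFtil : ∀ x : ℝ, Ftil (δ1 * x + δ3) = F x / δ1 ^ 2 - 2 * H x * χ x / (δ1 ^ 2 * δ4)) :
    ∀ ttil xtil : ℝ,
      deriv (fun s => vtil s xtil) ttil
        = deriv (fun y => deriv (fun z => vtil ttil z) y) xtil
          + Htil xtil * vtil ttil xtil ^ 2 + Ftil xtil * vtil ttil xtil := by
  intro ttil xtil
  have hδ1sq : (δ1 : ℝ) ^ 2 ≠ 0 := pow_ne_zero 2 hδ1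
  set t0 : ℝ := (ttil - δ2) / δ1 ^ 2 with ht0def
  set x0 : ℝ := (xtil - δ3) / δ1 with hx0def
  have ht0 : δ1 ^ 2 * t0 + δ2 = ttil := by rw [ht0def]; field_simp; ring
  have hx0 : δ1 * x0 + δ3 = xtil := by rw [hx0def]; field_simp; ring
  -- smoothness of slices
  have hv_x : ∀ t : ℝ, ContDiff ℝ (⊤ : ℕ∞) (fun z => v t z) := fun t =>
    hv.comp (contDiff_const.prodMk contDiff_id)
  have hv_t : ∀ x : ℝ, ContDiff ℝ (⊤ : ℕ∞) (fun s => v s x) := fun x =>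
    hv.comp (contDiff_id.prodMk contDiff_const)
  -- representation of vtil everywhere
  have hrep : ∀ s y : ℝ,
      vtil s y = δ4 * v ((s - δ2) / δ1 ^ 2) ((y - δ3) / δ1) + χ ((y - δ3) / δ1) := by
    intro s y
    have h := hvtil ((s - δ2) / δ1 ^ 2) ((y - δ3) / δ1)
    rw [show δ1 ^ 2 * ((s - δ2) / δ1 ^ 2) + δ2 = s by field_simp; ring,
      show δ1 * ((y - δ3) / δ1) + δ3 = y by field_simp; ring] at h
    exact h
  -- time derivative
  have LHS : deriv (fun s => vtil s xtil) ttil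
      = δ4 * (deriv (fun s => v s x0) t0 / δ1 ^ 2) := by
    have e1 : (fun s => vtil s xtil)
        = fun s => δ4 * v ((s - δ2) / δ1 ^ 2) x0 + χ x0 := by
      funext s; rw [hrep s xtil]
    rw [e1, deriv_add_const]
    rw [deriv_const_mul]
    · rw [deriv_comp_affine (fun s => v s x0) δ2 (δ1 ^ 2) ttil
        (((hv_t x0).differentiable (by simp)) _)]
    · exact (((hv_t x0).differentiable (by simp)).comp (by fun_prop)).differentiableAt
  -- first space derivative
  have e2 : (fun y => deriv (fun z => vtil ttil z) y)
      = fun y => δ4 * (deriv (fun z => v t0 z) ((y - δ3) / δ1) / δ1)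
        + deriv χ ((y - δ3) / δ1) / δ1 := by
    funext y
    have e3 : (fun z => vtil ttil z)
        = fun z => δ4 * v t0 ((z - δ3) / δ1) + χ ((z - δ3) / δ1) := by
      funext z; rw [hrep ttil z]
    rw [e3, deriv_fun_add, deriv_const_mul,
      deriv_comp_affine (fun z => v t0 z) δ3 δ1 y (((hv_x t0).differentiable (by simp)) _),
      deriv_comp_affine χ δ3 δ1 y (hχd _)]
    · exact (((hv_x t0).differentiable (by simp)).comp (by fun_prop)).differentiableAt
    · exact ((((hv_x t0).differentiable (by simp)).comp (by fun_prop)).differentiableAt).const_mul _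
    · exact (hχd.comp (by fun_prop)).differentiableAt
  -- second space derivative
  have hvx_top : ContDiff ℝ ((⊤ : ℕ∞) : WithTop ℕ∞) (fun z => v t0 z) :=
    (hv_x t0).of_le (by simp)
  have hvx_diff : Differentiable ℝ (deriv (fun z => v t0 z)) :=
    ((contDiff_infty_iff_deriv.mp hvx_top).2).differentiable (by simp)
  have RHS2 : deriv (fun y => deriv (fun z => vtil ttil z) y) xtil
      = δ4 * (deriv (deriv (fun z => v t0 z)) x0 / δ1 ^ 2)
        + deriv (deriv χ) x0 / δ1 ^ 2 := by
    rw [e2, deriv_fun_add, deriv_const_mul, deriv_div_const, deriv_div_const,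
      deriv_comp_affine (deriv (fun z => v t0 z)) δ3 δ1 xtil (hvx_diff _),
      deriv_comp_affine (deriv χ) δ3 δ1 xtil (hχd2 _)]
    · ring
    · exact ((hvx_diff.comp (by fun_prop)).differentiableAt).div_const _
    · exact (((hvx_diff.comp (by fun_prop)).differentiableAt).div_const _).const_mul _
    · exact ((hχd2.comp (by fun_prop)).differentiableAt).div_const _
  have hval : vtil ttil xtil = δ4 * v t0 x0 + χ x0 := by
    rw [← ht0, ← hx0, hvtil]
  have hH' : Htil xtil = H x0 / (δ1 ^ 2 * δ4) := by rw [← hx0, hHtil]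
  have hF' : Ftil xtil = F x0 / δ1 ^ 2 - 2 * H x0 * χ x0 / (δ1 ^ 2 * δ4) := by
    rw [← hx0, hFtil]
  rw [LHS, RHS2, hval, hH', hF', hPDE t0 x0, hχODE x0]
  have hder : deriv (fun y => deriv (fun z => v t0 z) y) x0
      = deriv (deriv (fun z => v t0 z)) x0 := rfl
  rw [hder] at *
  field_simp
  ring
end

section
/- The gauging transformation t'=t, x'=∫√(f/g)dx, u'=u maps the class f(x)u_t=(g(x)u_x)_x+h(x)u^m onto its subclass with f=g. Precisely: let I be an open real interval, let f,g be smooth positive functions and h a smooth nonvanishing function on I, let m be real with m≠0,1, and fix x0 ∈ I. Define X: I → ℝ by X(x) = x0 + ∫_{x0}^{x} √(f(y)/g(y)) dy, a smooth strictly increasing bijection of I onto an open interval J. Define on J the functions f'(X(x)) = √(f(x)g(x)) and h'(X(x)) = √(g(x)/f(x))·h(x). If u: ℝ×I → (0,∞) is smooth and satisfies f(x)u_t = (g(x)u_x)_x + h(x)u^m on ℝ×I, then u': ℝ×J → (0,∞) defined by u'(t, X(x)) = u(t,x) satisfies f'(x') u'_t = (f'(x') u'_{x'})_{x'} + h'(x')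 u'^m on ℝ×J. -/
open Real Set

/-- The gauging transformation `t' = t`, `x' = ∫√(f/g)dx`, `u' = u` maps the class
`f(x)u_t = (g(x)u_x)_x + h(x)u^m` onto its subclass with `f = g`. -/
theorem gauge_f_eq_g
    (I J : Set ℝ) (hI : IsOpen I) (hIc : I.OrdConnected)
    (hJ : IsOpen J) (hJc : J.OrdConnected)
    (f g h : ℝ → ℝ) (m : ℝ)
    (hf : ContDiffOn ℝ (⊤ : ℕ∞) f I) (hg : ContDiffOn ℝ (⊤ : ℕ∞) g I) (hh : ContDiffOn ℝ (⊤ : ℕ∞) h I)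
    (hfpos : ∀ x ∈ I, 0 < f x) (hgpos : ∀ x ∈ I, 0 < g x) (hh0 : ∀ x ∈ I, h x ≠ 0)
    (hm0 : m ≠ 0) (hm1 : m ≠ 1)
    (x0 : ℝ) (hx0 : x0 ∈ I)
    (X : ℝ → ℝ)
    (hX : ∀ x : ℝ, X x = x0 + ∫ y in x0..x, Real.sqrt (f y / g y))
    (hXsmooth : ContDiffOn ℝ (⊤ : ℕ∞) X I)
    (hXmono : StrictMonoOn X I)
    (hXbij : BijOn X I J)
    (f' h' : ℝ → ℝ)
    (hf' : ∀ x ∈ I, f' (X x) = Real.sqrt (f x * g x))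
    (hh' : ∀ x ∈ I, h' (X x) = Real.sqrt (g x / f x) * h x)
    (u : ℝ → ℝ → ℝ)
    (hu : ContDiffOn ℝ (⊤ : ℕ∞) (Function.uncurry u) (univ ×ˢ I))
    (hupos : ∀ t : ℝ, ∀ x ∈ I, 0 < u t x)
    (hPDE : ∀ t : ℝ, ∀ x ∈ I,
      f x * deriv (fun s => u s x) t
        = deriv (fun y => g y * deriv (fun z => u t z) y) x + h x * u t x ^ m)
    (u' : ℝ → ℝ → ℝ)
    (hu' : ∀ t : ℝ, ∀ x ∈ I, u' t (X x) = u t x) :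
    ∀ t : ℝ, ∀ x' ∈ J,
      0 < u' t x' ∧
      f' x' * deriv (fun s => u' s x') t
        = deriv (fun y => f' y * deriv (fun z => u' t z) y) x'
          + h' x' * u' t x' ^ m := by

  intro t x' hx'
  obtain ⟨x, hx, rfl⟩ := hXbij.surjOn hx'
  set w : ℝ → ℝ := fun y => Real.sqrt (f y / g y) with hwdef
  have hwcont : ContinuousOn w I :=
    ((hf.continuousOn.div hg.continuousOn fun y hy => (hgpos y hy).ne')).sqrt
  have hwpos : ∀ z ∈ I, 0 < w z := fun z hz =>
    Real.sqrt_pos.2 (div_pos (hfpos z hz) (hgpos z hz))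
  -- derivative of X
  have hXderiv : ∀ z ∈ I, HasStrictDerivAt X (w z) z := by
    intro z hz
    have hXfun : X = fun r => x0 + ∫ y in x0..r, w y := funext hX
    rw [hXfun]
    have hint : IntervalIntegrable w MeasureTheory.volume x0 z :=
      (hwcont.mono (hIc.uIcc_subset hx0 hz)).intervalIntegrable
    have hmeas : StronglyMeasurableAtFilter w (nhds z) MeasureTheory.volume :=
      hwcont.stronglyMeasurableAtFilter hI z hz
    exact (intervalIntegral.integral_hasStrictDerivAt_right hint hmeas
      (hwcont.continuousAt (hI.mem_nhds hz))).const_add x0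
  -- smoothness of x ↦ u t x and its derivative
  have hU : ContDiffOn ℝ (⊤ : ℕ∞) (fun z => u t z) I := by
    have hmk : ContDiff ℝ (⊤ : ℕ∞) (fun z : ℝ => ((t, z) : ℝ × ℝ)) := contDiff_const.prodMk contDiff_id
    exact hu.comp hmk.contDiffOn (fun z hz => ⟨mem_univ t, hz⟩)
  have hUx : ContDiffOn ℝ (⊤ : ℕ∞) (deriv (fun z => u t z)) I := hU.deriv_of_isOpen hI (by simp)
  -- derivative of u' t at points of the image
  have claim1 : ∀ z ∈ I, HasDerivAt (fun y => u' t y)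
      (deriv (fun r => u t r) z * (w z)⁻¹) (X z) := by
    intro z hz
    have hXz := hXderiv z hz
    have hwz : (w z) ≠ 0 := (hwpos z hz).ne'
    set ψ := hXz.localInverse X (w z) z hwz with hψdef
    have hF := hXz.hasStrictFDerivAt_equiv hwz
    have hleft : ∀ᶠ p in nhds z, ψ (X p) = p := hF.eventually_left_inverse
    have hψz : ψ (X z) = z := hleft.self_of_nhds
    have hright : ∀ᶠ y in nhds (X z), X (ψ y) = y := hF.eventually_right_inverse
    have hψcont : ContinuousAt ψ (X z) := hF.localInverse_continuousAt
    have hmemI : ∀ᶠ y in nhds (X z), ψ y ∈ I := by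
      have : I ∈ nhds (ψ (X z)) := by rw [hψz]; exact hI.mem_nhds hz
      exact hψcont.eventually_mem this
    have heq : (fun y => u t (ψ y)) =ᶠ[nhds (X z)] fun y => u' t y := by
      filter_upwards [hright, hmemI] with y h1 h2
      exact (hu' t (ψ y) h2).symm.trans (congrArg (u' t) h1)
    have hUd : HasDerivAt (fun r => u t r) (deriv (fun r => u t r) z) z :=
      ((hU.contDiffAt (hI.mem_nhds hz)).differentiableAt (by simp)).hasDerivAt
    have hUd' : HasDerivAt (fun r => u t r) (deriv (fun r => u t r) z) (ψ (X z)) := by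
      rw [hψz]; exact hUd
    have hψd : HasDerivAt ψ (w z)⁻¹ (X z) := (hXz.to_localInverse hwz).hasDerivAt
    have hcomp : HasDerivAt (fun y => u t (ψ y))
        (deriv (fun r => u t r) z * (w z)⁻¹) (X z) := hUd'.comp (X z) hψd
    exact hcomp.congr_of_eventuallyEq heq.symm
  have claim2 : ∀ z ∈ I, deriv (fun y => u' t y) (X z)
      = deriv (fun r => u t r) z * (w z)⁻¹ := fun z hz => (claim1 z hz).deriv
  -- key sqrt identity
  have key : ∀ z ∈ I, Real.sqrt (f z * g z) * (w z)⁻¹ = g z := by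
    intro z hz
    have hfz := hfpos z hz
    have hgz := hgpos z hz
    have hsf : Real.sqrt (f z) ≠ 0 := (Real.sqrt_pos.2 hfz).ne'
    have hsg : Real.sqrt (g z) ≠ 0 := (Real.sqrt_pos.2 hgz).ne'
    have h1 : w z = Real.sqrt (f z) / Real.sqrt (g z) := by
      rw [hwdef]; exact Real.sqrt_div hfz.le (g z)
    have h2 : Real.sqrt (g z) * Real.sqrt (g z) = g z := Real.mul_self_sqrt hgz.le
    rw [h1, Real.sqrt_mul hfz.le, inv_div]
    have h3 : Real.sqrt (f z) * Real.sqrt (g z) * (Real.sqrt (g z) / Real.sqrt (f z))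
        = Real.sqrt (g z) * Real.sqrt (g z) * (Real.sqrt (f z) / Real.sqrt (f z)) := by ring
    rw [h3, div_self hsf, mul_one, h2]
  have hFG : ∀ z ∈ I, f' (X z) * deriv (fun y => u' t y) (X z)
      = g z * deriv (fun r => u t r) z := by
    intro z hz
    rw [claim2 z hz, hf' z hz]
    calc Real.sqrt (f z * g z) * (deriv (fun r => u t r) z * (w z)⁻¹)
        = (Real.sqrt (f z * g z) * (w z)⁻¹) * deriv (fun r => u t r) z := by ring
      _ = g z * deriv (fun r => u t r) z := by rw [key z hz]
  -- derivative of the transformed flux at X x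
  have hXx := hXderiv x hx
  have hwx : (w x) ≠ 0 := (hwpos x hx).ne'
  set ψ := hXx.localInverse X (w x) x hwx with hψdef
  have hF := hXx.hasStrictFDerivAt_equiv hwx
  have hψx : ψ (X x) = x := hF.eventually_left_inverse.self_of_nhds
  have hright : ∀ᶠ y in nhds (X x), X (ψ y) = y := hF.eventually_right_inverse
  have hmemI : ∀ᶠ y in nhds (X x), ψ y ∈ I := by
    have : I ∈ nhds (ψ (X x)) := by rw [hψx]; exact hI.mem_nhds hx
    exact hF.localInverse_continuousAt.eventually_mem this
  set G : ℝ → ℝ := fun y => g y * deriv (fun z => u t z) y with hGdef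
  have hGd : HasDerivAt G (deriv G x) x := by
    have h1 : DifferentiableAt ℝ g x := (hg.contDiffAt (hI.mem_nhds hx)).differentiableAt (by simp)
    have h2 : DifferentiableAt ℝ (deriv (fun z => u t z)) x :=
      (hUx.contDiffAt (hI.mem_nhds hx)).differentiableAt (by simp)
    exact (h1.mul h2).hasDerivAt
  have hGd' : HasDerivAt G (deriv G x) (ψ (X x)) := by rw [hψx]; exact hGd
  have hψd : HasDerivAt ψ (w x)⁻¹ (X x) := (hXx.to_localInverse hwx).hasDerivAt
  have hcompG : HasDerivAt (fun y => G (ψ y)) (deriv G x * (w x)⁻¹) (X x) :=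
    hGd'.comp (X x) hψd
  have heqF : (fun y => G (ψ y)) =ᶠ[nhds (X x)]
      fun y => f' y * deriv (fun z => u' t z) y := by
    filter_upwards [hright, hmemI] with y h1 h2
    have := hFG (ψ y) h2
    rw [h1] at this
    rw [hGdef]
    exact this.symm
  have hFd : HasDerivAt (fun y => f' y * deriv (fun z => u' t z) y)
      (deriv G x * (w x)⁻¹) (X x) := hcompG.congr_of_eventuallyEq heqF.symm
  have hderivF : deriv (fun y => f' y * deriv (fun z => u' t z) y) (X x)
      = deriv G x * (w x)⁻¹ := hFd.deriv
  -- time derivative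
  have htime : (fun s => u' s (X x)) = fun s => u s x := funext fun s => hu' s x hx
  refine ⟨by rw [hu' t x hx]; exact hupos t x hx, ?_⟩
  rw [htime, hh' x hx, hu' t x hx, hf' x hx, hderivF]
  -- final algebra
  have hp := hPDE t x hx
  have hfx := hfpos x hx
  have hgx := hgpos x hx
  have hsf : (0:ℝ) < Real.sqrt (f x) := Real.sqrt_pos.2 hfx
  have hsg : (0:ℝ) < Real.sqrt (g x) := Real.sqrt_pos.2 hgx
  have h1 : w x = Real.sqrt (f x) / Real.sqrt (g x) := by
    rw [hwdef]; exact Real.sqrt_div hfx.le (g x)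
  have h2 : Real.sqrt (f x * g x) = Real.sqrt (f x) * Real.sqrt (g x) :=
    Real.sqrt_mul hfx.le (g x)
  have h3 : Real.sqrt (g x / f x) = Real.sqrt (g x) / Real.sqrt (f x) :=
    Real.sqrt_div hgx.le (f x)
  have h4 : Real.sqrt (f x) * Real.sqrt (f x) = f x := Real.mul_self_sqrt hfx.le
  rw [h1, h2, h3]
  rw [show f x = Real.sqrt (f x) * Real.sqrt (f x) from h4.symm] at hp
  field_simp
  nlinarith [hp, hsf, hsg]
end

section
/- The change of dependent variable v=√f·u maps the initial class onto the imaged class. Precisely: let I be an open real interval, let f be a smooth positive function and h a smooth function on I, and let m be real with m≠0,1. Define F(x) = −(√f)''(x)/√f(x) and H(x) = h(x)/f(x)^{(m+1)/2} on I. If u: ℝ×I → (0,∞) is smooth and satisfies f(x)u_t(t,x) = ∂_x( f(x) u_x(t,x) ) + h(x) u(t,x)^m on ℝ×I, then v(t,x) := √f(x) · u(t,x) satisfies v_t(t,x) = v_{xx}(t,x) + H(x) v(t,x)^m + F(x) v(t,x) on ℝ×I. -/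
open Real Set

/-- The change of dependent variable `v = √f · u` maps the initial class
`f(x)u_t = (f(x)u_x)_x + h(x)u^m` onto the imaged class `v_t = v_{xx} + H(x)v^m + F(x)v`. -/
theorem gauge_to_imaged_class
    (I : Set ℝ) (hI : IsOpen I) (hIc : I.OrdConnected)
    (f h : ℝ → ℝ) (m : ℝ)
    (hf : ContDiffOn ℝ (⊤ : ℕ∞) f I) (hh : ContDiffOn ℝ (⊤ : ℕ∞) h I)
    (hfpos : ∀ x ∈ I, 0 < f x)
    (hm0 : m ≠ 0) (hm1 : m ≠ 1)
    (F H : ℝ → ℝ)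
    (hF : ∀ x ∈ I, F x = -(deriv (fun y => deriv (fun z => Real.sqrt (f z)) y) x
      / Real.sqrt (f x)))
    (hH : ∀ x ∈ I, H x = h x / f x ^ ((m + 1) / 2))
    (u : ℝ → ℝ → ℝ)
    (hu : ContDiffOn ℝ (⊤ : ℕ∞) (Function.uncurry u) (univ ×ˢ I))
    (hupos : ∀ t : ℝ, ∀ x ∈ I, 0 < u t x)
    (hPDE : ∀ t : ℝ, ∀ x ∈ I,
      f x * deriv (fun s => u s x) t
        = deriv (fun y => f y * deriv (fun z => u t z) y) x + h x * u t x ^ m)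
    (v : ℝ → ℝ → ℝ)
    (hv : ∀ t x : ℝ, v t x = Real.sqrt (f x) * u t x) :
    ∀ t : ℝ, ∀ x ∈ I,
      deriv (fun s => v s x) t
        = deriv (fun y => deriv (fun z => v t z) y) x
          + H x * v t x ^ m + F x * v t x := by
  intro t x hx
  set g : ℝ → ℝ := fun y => Real.sqrt (f y) with hg_def
  -- smoothness of g on I
  have hgC : ContDiffOn ℝ (⊤ : ℕ∞) g I := hf.sqrt (fun y hy => (hfpos y hy).ne')
  have hg'C : ContDiffOn ℝ (⊤ : ℕ∞) (deriv g) I := hgC.deriv_of_isOpen hI (by simp)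
  -- smoothness of u t on I
  have hutC : ContDiffOn ℝ (⊤ : ℕ∞) (u t) I := by
    have hcomp : ContDiff ℝ (⊤ : ℕ∞) (fun y : ℝ => (t, y)) := by
      exact (contDiff_const.prodMk contDiff_id)
    have := hu.comp hcomp.contDiffOn (fun y hy => ⟨mem_univ _, hy⟩)
    exact this
  have hut'C : ContDiffOn ℝ (⊤ : ℕ∞) (deriv (u t)) I := hutC.deriv_of_isOpen hI (by simp)
  have hxmem : I ∈ nhds x := hI.mem_nhds hx
  -- differentiability at points of I
  have dg : ∀ y ∈ I, DifferentiableAt ℝ g y := fun y hy =>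
    (hgC.contDiffAt (hI.mem_nhds hy)).differentiableAt (by simp)
  have dg' : DifferentiableAt ℝ (deriv g) x :=
    (hg'C.contDiffAt hxmem).differentiableAt (by simp)
  have dut : ∀ y ∈ I, DifferentiableAt ℝ (u t) y := fun y hy =>
    (hutC.contDiffAt (hI.mem_nhds hy)).differentiableAt (by simp)
  have dut' : DifferentiableAt ℝ (deriv (u t)) x :=
    (hut'C.contDiffAt hxmem).differentiableAt (by simp)
  -- time derivative of u exists
  have duT : DifferentiableAt ℝ (fun s => u s x) t := by
    have h1 : ContDiffAt ℝ (⊤ : ℕ∞) (Function.uncurry u) (t, x) :=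
      hu.contDiffAt (by rw [(isOpen_univ.prod hI).mem_nhds_iff]; exact ⟨mem_univ _, hx⟩)
    have h2 : ContDiff ℝ (⊤ : ℕ∞) (fun s : ℝ => (s, x)) := contDiff_id.prodMk contDiff_const
    exact ((h1.comp t (h2.contDiffAt)).differentiableAt (by simp))
  -- time derivative of v
  have hvt : deriv (fun s => v s x) t = g x * deriv (fun s => u s x) t := by
    have : (fun s => v s x) = fun s => g x * u s x := funext fun s => hv s x
    rw [this, deriv_const_mul _ duT]
  -- first space derivative of v on I
  have hvx : ∀ y ∈ I, deriv (fun z => v t z) y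
      = deriv g y * u t y + g y * deriv (u t) y := by
    intro y hy
    have : (fun z => v t z) = fun z => g z * u t z := funext fun z => hv t z
    rw [this, deriv_fun_mul (dg y hy) (dut y hy)]
  -- second space derivative of v at x
  have hvxx : deriv (fun y => deriv (fun z => v t z) y) x
      = deriv (deriv g) x * u t x + deriv g x * deriv (u t) x
        + (deriv g x * deriv (u t) x + g x * deriv (deriv (u t)) x) := by
    have heq : (fun y => deriv (fun z => v t z) y)
        =ᶠ[nhds x] fun y => deriv g y * u t y + g y * deriv (u t) y :=
      Filter.eventuallyEq_of_mem hxmem hvx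
    rw [heq.deriv_eq]
    rw [deriv_fun_add (f := fun y => deriv g y * u t y) (g := fun y => g y * deriv (u t) y) (dg'.mul (dut x hx)) ((dg x hx).mul dut'),
      deriv_fun_mul dg' (dut x hx), deriv_fun_mul (dg x hx) dut']
  -- PDE right-hand side expansion
  have hrhs : deriv (fun y => f y * deriv (fun z => u t z) y) x
      = deriv f x * deriv (u t) x + f x * deriv (deriv (u t)) x := by
    have df : DifferentiableAt ℝ f x := (hf.contDiffAt hxmem).differentiableAt (by simp)
    exact deriv_mul df dut'
  -- relation deriv f = 2 g g'
  have hdf : deriv f x = 2 * g x * deriv g x := by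
    have heq : f =ᶠ[nhds x] fun y => g y ^ 2 :=
      Filter.eventuallyEq_of_mem hxmem fun y hy =>
        (Real.sq_sqrt (hfpos y hy).le).symm
    rw [heq.deriv_eq, deriv_fun_pow (dg x hx) 2]
    ring
  -- positivity facts
  have hgpos : 0 < g x := Real.sqrt_pos.mpr (hfpos x hx)
  have hUpos : 0 < u t x := hupos t x hx
  -- rpow facts
  have hfx : f x = g x ^ (2 : ℕ) := (Real.sq_sqrt (hfpos x hx).le).symm
  have hpow : f x ^ ((m + 1) / 2) = g x ^ m * g x := by
    have h1 : g x = f x ^ ((1 : ℝ) / 2) := Real.sqrt_eq_rpow (f x)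
    rw [h1, ← Real.rpow_mul (hfpos x hx).le, ← Real.rpow_add (hfpos x hx)]
    congr 1
    ring
  have hvm : v t x ^ m = g x ^ m * u t x ^ m := by
    rw [hv t x]
    exact Real.mul_rpow hgpos.le hUpos.le
  -- assemble
  have hp := hPDE t x hx
  rw [hrhs, hdf] at hp
  rw [hvt, hvxx, hH x hx, hF x hx, hvm, hv t x, hpow]
  have hgm : 0 < g x ^ m := Real.rpow_pos_of_pos hgpos m
  have hfg : deriv (fun y => deriv (fun z => Real.sqrt (f z)) y) x = deriv (deriv g) x := rfl
  rw [hfg]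
  rw [hfx] at hp
  have hgx : Real.sqrt (f x) = g x := rfl
  rw [hgx]
  have e1 : h x / (g x ^ m * g x) * (g x ^ m * u t x ^ m) = h x * u t x ^ m / g x := by
    field_simp
  have e2 : -(deriv (deriv g) x / g x) * (g x * u t x) = -(deriv (deriv g) x * u t x) := by
    field_simp
  rw [e1, e2]
  field_simp
  linear_combination hp
end

section
/- The change of dependent variable w = v + F/(2H) maps the imaged class with m=2 onto the double-imaged class. Precisely: let I be an open real interval, let H be a smooth nonvanishing function and F a smooth function on I, and define G(x) = −( F/(2H) )''(x) − F(x)²/(4H(x)) on I. If v: ℝ×I → ℝ is smooth and satisfies v_t = v_{xx} + H(x) v² + F(x) v on ℝ×I, then the function w(t,x) := v(t,x) + F(x)/(2H(x)) satisfies w_t(t,x) = w_{xx}(t,x) + H(x) w(t,x)² + G(x) for all (t,x) ∈ ℝ×I. -/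
open Real Set

/-- The change of dependent variable `w = v + F/(2H)` maps the imaged class with
`m = 2` onto the double-imaged class `w_t = w_{xx} + H(x)w² + G(x)`. -/
theorem gauge_to_double_imaged_class
    (I : Set ℝ) (hI : IsOpen I) (hIc : I.OrdConnected)
    (H F : ℝ → ℝ)
    (hH : ContDiffOn ℝ (⊤ : ℕ∞) H I) (hF : ContDiffOn ℝ (⊤ : ℕ∞) F I)
    (hH0 : ∀ x ∈ I, H x ≠ 0)
    (G : ℝ → ℝ)
    (hG : ∀ x ∈ I,
      G x = -(deriv (fun y => deriv (fun z => F z / (2 * H z)) y) x)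
        - F x ^ 2 / (4 * H x))
    (v : ℝ → ℝ → ℝ)
    (hv : ContDiffOn ℝ (⊤ : ℕ∞) (Function.uncurry v) (univ ×ˢ I))
    (hPDE : ∀ t : ℝ, ∀ x ∈ I,
      deriv (fun s => v s x) t
        = deriv (fun y => deriv (fun z => v t z) y) x + H x * v t x ^ 2 + F x * v t x)
    (w : ℝ → ℝ → ℝ)
    (hw : ∀ t x : ℝ, w t x = v t x + F x / (2 * H x)) :
    ∀ t : ℝ, ∀ x ∈ I,
      deriv (fun s => w s x) t
        = deriv (fun y => deriv (fun z => w t z) y) x + H x * w t x ^ 2 + G x := by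
  intro t x hx
  set φ : ℝ → ℝ := fun z => F z / (2 * H z) with hφdef
  have hφ : ContDiffOn ℝ (⊤ : ℕ∞) φ I :=
    hF.div (contDiffOn_const.mul hH) (fun y hy => by simpa using hH0 y hy)
  have hmem : I ∈ nhds x := hI.mem_nhds hx
  have hvt : ContDiffOn ℝ (⊤ : ℕ∞) (fun z => v t z) I := by
    have hpt : ContDiffOn ℝ (⊤ : ℕ∞) (fun z : ℝ => ((t, z) : ℝ × ℝ)) I :=
      (contDiff_const.prodMk contDiff_id).contDiffOn
    exact hv.comp hpt (fun z hz => ⟨mem_univ t, hz⟩)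
  have dv : ∀ y ∈ I, DifferentiableAt ℝ (fun z => v t z) y := fun y hy =>
    (hvt.contDiffAt (hI.mem_nhds hy)).differentiableAt (by simp)
  have dφ : ∀ y ∈ I, DifferentiableAt ℝ φ y := fun y hy =>
    (hφ.contDiffAt (hI.mem_nhds hy)).differentiableAt (by simp)
  have dv' : DifferentiableAt ℝ (deriv fun z => v t z) x :=
    (((hvt.deriv_of_isOpen (m := 1) hI (WithTop.coe_le_coe.mpr le_top))).contDiffAt hmem).differentiableAt (by simp)
  have dφ' : DifferentiableAt ℝ (deriv φ) x :=
    ((hφ.deriv_of_isOpen (m := 1) hI (WithTop.coe_le_coe.mpr le_top)).contDiffAt hmem).differentiableAt (by simp)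
  have hwfun : (fun z => w t z) = fun z => v t z + φ z := funext fun z => hw t z
  have hev : (fun y => deriv (fun z => w t z) y) =ᶠ[nhds x]
      fun y => deriv (fun z => v t z) y + deriv φ y := by
    filter_upwards [hmem] with y hy
    rw [hwfun, deriv_fun_add (dv y hy) (dφ y hy)]
  have hsecond : deriv (fun y => deriv (fun z => w t z) y) x
      = deriv (fun y => deriv (fun z => v t z) y) x + deriv (fun y => deriv φ y) x := by
    rw [hev.deriv_eq]
    exact deriv_add dv' dφ'
  have htime : deriv (fun s => w s x) t = deriv (fun s => v s x) t := by
    have h1 : (fun s => w s x) = fun s => v s x + φ x := funext fun s => hw s x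
    rw [h1, deriv_add_const]
  rw [htime, hsecond, hw t x, hG x hx, hPDE t x hx]
  have hHx := hH0 x hx
  field_simp
  ring
end

section
/- Additional equivalence transformation removing the exponential factor e^{qx} (transformation (17), case 1 ↦ case 1 with q̃=0). Let m be real with m≠0,1, let δ, q, a1 be real constants, and set α = q/(1−m). If v: ℝ×ℝ → (0,∞) is smooth and satisfies v_t = v_{xx} + δ e^{qx} v^m + a1 v on ℝ×ℝ, then the function ṽ defined by ṽ(t, y) = e^{−α(y−2αt)} v(t, y−2αt) satisfies ṽ_t = ṽ_{yy} + δ ṽ^m + (a1 + α²) ṽ on ℝ×ℝ. -/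
open Real Set

/-- Additional equivalence transformation removing the exponential factor `e^{qx}`
(transformation (17), case 1 ↦ case 1 with `q̃ = 0`). -/
theorem additional_equivalence_case1
    (m δ q a1 : ℝ) (hm0 : m ≠ 0) (hm1 : m ≠ 1)
    (α : ℝ) (hα : α = q / (1 - m))
    (v : ℝ → ℝ → ℝ) (hv : ContDiff ℝ (⊤ : ℕ∞) (Function.uncurry v))
    (hvpos : ∀ t x : ℝ, 0 < v t x)
    (hPDE : ∀ t x : ℝ,
      deriv (fun s => v s x) t
        = deriv (fun y => deriv (fun z => v t z) y) x
          + δ * Real.exp (q * x) * v t x ^ m + a1 * v t x)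
    (vtil : ℝ → ℝ → ℝ)
    (hvtil : ∀ t y : ℝ,
      vtil t y = Real.exp (-(α * (y - 2 * α * t))) * v t (y - 2 * α * t)) :
    ∀ t y : ℝ,
      deriv (fun s => vtil s y) t
        = deriv (fun z => deriv (fun z' => vtil t z') z) y
          + δ * vtil t y ^ m + (a1 + α ^ 2) * vtil t y := by
  intro t y
  have h1m : (1 : ℝ) - m ≠ 0 := sub_ne_zero.mpr (Ne.symm hm1)
  set F : ℝ × ℝ → ℝ := Function.uncurry v with hF
  have hFd : Differentiable ℝ F := hv.differentiable (by simp)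
  set G : ℝ × ℝ → ℝ := fun p => fderiv ℝ F p (0, 1) with hG
  have hGsm : ContDiff ℝ (⊤ : ℕ∞) G :=
    (ContinuousLinearMap.apply ℝ ℝ ((0 : ℝ), (1 : ℝ))).contDiff.comp
      (hv.fderiv_right (by simp))
  have hGd : Differentiable ℝ G := hGsm.differentiable (by simp)
  -- partial derivative in x
  have hvx : ∀ a b : ℝ, HasDerivAt (fun z => v a z) (G (a, b)) b := by
    intro a b
    have hline : HasDerivAt (fun z : ℝ => ((a : ℝ), z)) ((0 : ℝ), (1 : ℝ)) b :=
      (hasDerivAt_const b a).prodMk (hasDerivAt_id b)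
    exact (hFd (a, b)).hasFDerivAt.comp_hasDerivAt b hline
  -- partial derivative in t
  have hvt : ∀ a b : ℝ, HasDerivAt (fun s => v s b) (fderiv ℝ F (a, b) (1, 0)) a := by
    intro a b
    have hline : HasDerivAt (fun s : ℝ => (s, (b : ℝ))) ((1 : ℝ), (0 : ℝ)) a :=
      (hasDerivAt_id a).prodMk (hasDerivAt_const a b)
    exact (hFd (a, b)).hasFDerivAt.comp_hasDerivAt a hline
  -- second partial derivative in x
  have hvxx : ∀ a b : ℝ, HasDerivAt (fun z => G (a, z)) (fderiv ℝ G (a, b) (0, 1)) b := by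
    intro a b
    have hline : HasDerivAt (fun z : ℝ => ((a : ℝ), z)) ((0 : ℝ), (1 : ℝ)) b :=
      (hasDerivAt_const b a).prodMk (hasDerivAt_id b)
    exact (hGd (a, b)).hasFDerivAt.comp_hasDerivAt b hline
  set x0 : ℝ := y - 2 * α * t with hx0
  set V : ℝ := v t x0 with hV
  set E : ℝ := Real.exp (-(α * x0)) with hE
  set vx0 : ℝ := G (t, x0) with hvx0
  set vt0 : ℝ := fderiv ℝ F (t, x0) (1, 0) with hvt0
  set vxx0 : ℝ := fderiv ℝ G (t, x0) (0, 1) with hvxx0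
  -- the PDE at (t, x0)
  have hpde : vt0 = vxx0 + δ * Real.exp (q * x0) * V ^ m + a1 * V := by
    have h1 : deriv (fun s => v s x0) t = vt0 := (hvt t x0).deriv
    have h2 : (fun z => deriv (fun z' => v t z') z) = fun z => G (t, z) :=
      funext fun z => (hvx t z).deriv
    have h3 := hPDE t x0
    rw [h1, h2] at h3
    rw [h3, (hvxx t x0).deriv]
  -- time derivative of vtil at (t, y)
  have hTime : HasDerivAt (fun s => vtil s y) (E * (2 * α ^ 2) * V + E * (vt0 - 2 * α * vx0)) t := by
    have hxs : ∀ s : ℝ, HasDerivAt (fun s : ℝ => y - 2 * α * s) (-(2 * α)) s := by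
      intro s
      have := ((hasDerivAt_id s).const_mul (2 * α)).const_sub y
      simpa using this
    have he : HasDerivAt (fun s => Real.exp (-(α * (y - 2 * α * s)))) (E * (2 * α ^ 2)) t := by
      have h1 : HasDerivAt (fun s : ℝ => -(α * (y - 2 * α * s))) (2 * α ^ 2) t := by
        have := ((hxs t).const_mul α).neg
        exact this.congr_deriv (by ring)
      simpa [hE, hx0] using h1.exp
    have hpath : HasDerivAt (fun s : ℝ => (s, y - 2 * α * s)) ((1 : ℝ), -(2 * α)) t :=
      (hasDerivAt_id t).prodMk (hxs t)
    have hw : HasDerivAt (fun s => v s (y - 2 * α * s))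
        (fderiv ℝ F (t, x0) (1, -(2 * α))) t := by
      have := (hFd (t, x0)).hasFDerivAt.comp_hasDerivAt t hpath
      exact this
    have hsplit : fderiv ℝ F (t, x0) (1, -(2 * α)) = vt0 - 2 * α * vx0 := by
      have hdec : ((1 : ℝ), -(2 * α)) = ((1 : ℝ), (0 : ℝ)) + (-(2 * α)) • ((0 : ℝ), (1 : ℝ)) := by
        simp [Prod.ext_iff]
      rw [hdec, map_add, map_smul, smul_eq_mul]
      simp only [hvt0, hvx0, hG]
      try ring
    rw [hsplit] at hw
    have hmul := he.mul hw
    have hfun : (fun s => vtil s y)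
        = fun s => Real.exp (-(α * (y - 2 * α * s))) * v s (y - 2 * α * s) :=
      funext fun s => hvtil s y
    rw [hfun]
    refine hmul.congr_deriv ?_
    try simp only [hV, hE, hx0]
    try ring
  -- first space derivative of vtil, at every point z
  have hSpace1 : ∀ z : ℝ, HasDerivAt (fun z' => vtil t z')
      (Real.exp (-(α * (z - 2 * α * t))) *
        (-α * v t (z - 2 * α * t) + G (t, z - 2 * α * t))) z := by
    intro z
    have hshift : HasDerivAt (fun z' : ℝ => z' - 2 * α * t) 1 z := by
      simpa using (hasDerivAt_id z).sub_const (2 * α * t)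
    have he : HasDerivAt (fun z' => Real.exp (-(α * (z' - 2 * α * t))))
        (Real.exp (-(α * (z - 2 * α * t))) * (-α)) z := by
      have h1 : HasDerivAt (fun z' : ℝ => -(α * (z' - 2 * α * t))) (-α) z := by
        have := ((hshift).const_mul α).neg
        exact this.congr_deriv (by ring)
      simpa using h1.exp
    have hw : HasDerivAt (fun z' => v t (z' - 2 * α * t)) (G (t, z - 2 * α * t) * 1) z :=
      (hvx t (z - 2 * α * t)).comp z hshift
    have hmul := he.mul hw
    have hfun : (fun z' => vtil t z')
        = fun z' => Real.exp (-(α * (z' - 2 * α * t))) * v t (z' - 2 * α * t) :=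
      funext fun z' => hvtil t z'
    rw [hfun]
    exact hmul.congr_deriv (by ring)
  -- second space derivative of vtil at (t, y)
  have hSpace2 : deriv (fun z => deriv (fun z' => vtil t z') z) y
      = E * (α ^ 2 * V - 2 * α * vx0 + vxx0) := by
    have hfun : (fun z => deriv (fun z' => vtil t z') z)
        = fun z => Real.exp (-(α * (z - 2 * α * t))) *
            (-α * v t (z - 2 * α * t) + G (t, z - 2 * α * t)) :=
      funext fun z => (hSpace1 z).deriv
    rw [hfun]
    have hshift : HasDerivAt (fun z : ℝ => z - 2 * α * t) 1 y := by
      simpa using (hasDerivAt_id y).sub_const (2 * α * t)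
    have he : HasDerivAt (fun z => Real.exp (-(α * (z - 2 * α * t)))) (E * (-α)) y := by
      have h1 : HasDerivAt (fun z : ℝ => -(α * (z - 2 * α * t))) (-α) y := by
        have := ((hshift).const_mul α).neg
        exact this.congr_deriv (by ring)
      simpa [hE, hx0] using h1.exp
    have hw1 : HasDerivAt (fun z => v t (z - 2 * α * t)) (vx0 * 1) y := by
      have := (hvx t (y - 2 * α * t)).comp y hshift
      exact this
    have hw2 : HasDerivAt (fun z => G (t, z - 2 * α * t)) (vxx0 * 1) y := by
      have := (hvxx t (y - 2 * α * t)).comp y hshift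
      exact this
    have hin : HasDerivAt (fun z => -α * v t (z - 2 * α * t) + G (t, z - 2 * α * t))
        (-α * (vx0 * 1) + vxx0 * 1) y := (hw1.const_mul (-α)).add hw2
    have hmul := he.mul hin
    have hval : (fun z => Real.exp (-(α * (z - 2 * α * t))) *
        (-α * v t (z - 2 * α * t) + G (t, z - 2 * α * t))) y
        = E * (-α * V + vx0) := by simp [hE, hV, hvx0, hx0]
    have := hmul.deriv
    simp only [Pi.mul_def] at this
    rw [this]
    simp only [hE, hV, hvx0, hx0]
    ring
  -- the rpow identity
  have hkey : E * (δ * Real.exp (q * x0) * V ^ m) = δ * (E * V) ^ m := by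
    have hEV : (E * V) ^ m = E ^ m * V ^ m :=
      Real.mul_rpow (Real.exp_pos _).le (hvpos t x0).le
    have hEm : E ^ m = Real.exp (-(α * x0) * m) := (Real.exp_mul _ m).symm
    have hexp : Real.exp (-(α * x0)) * Real.exp (q * x0) = Real.exp (-(α * x0) * m) := by
      rw [← Real.exp_add]
      congr 1
      have : q = α * (1 - m) := by rw [hα]; field_simp
      rw [this]; ring
    rw [hEV, hEm, hE, ← hexp]
    ring
  -- put everything together
  rw [hTime.deriv, hSpace2, hvtil t y]
  rw [show Real.exp (-(α * (y - 2 * α * t))) * v t (y - 2 * α * t) = E * V by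
    simp [hE, hV, hx0]]
  rw [hpde]
  rw [show E * (2 * α ^ 2) * V + E * (vxx0 + δ * Real.exp (q * x0) * V ^ m + a1 * V - 2 * α * vx0)
      = E * (α ^ 2 * V - 2 * α * vx0 + vxx0) + E * (δ * Real.exp (q * x0) * V ^ m)
        + (a1 + α ^ 2) * (E * V) by ring]
  rw [hkey]
end

section
/- Additional equivalence transformation (18) mapping case 4 to case 3 of the classification of the imaged class. Let m be real with m≠0,1, let p ≠ 0, δ, k, a2 be real constants, and set β = 2p/(m−1). Suppose w: ℝ×(0,∞) → (0,∞) is smooth and satisfies w_t = w_{xx} + δ x^k w^m + a2 x^{−2} w for all (t,x) ∈ ℝ×(0,∞). Then the function v defined on ℝ×(0,∞) by v(t,x) = exp( −(β/2)x² − 2β((k+2)/(m−1)) t ) · w( −e^{−4βt}/(4β), e^{−2βt} x ) satisfies v_t = v_{xx} + δ x^k e^{p x²} v^m + ( −β² x² + β(2k+5−m)/(1−m) + a2 x^{−2} ) v on ℝ×(0,∞). -/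
open Real Set

/-- Additional equivalence transformation (18) mapping case 4 to case 3 of the
classification of the imaged class. -/
theorem additional_equivalence_case4_to_case3
    (m δ k a2 p : ℝ) (hm0 : m ≠ 0) (hm1 : m ≠ 1) (hp : p ≠ 0)
    (β : ℝ) (hβ : β = 2 * p / (m - 1))
    (w : ℝ → ℝ → ℝ)
    (hw : ContDiffOn ℝ (⊤ : ℕ∞) (Function.uncurry w) (univ ×ˢ Ioi (0 : ℝ)))
    (hwpos : ∀ t : ℝ, ∀ x ∈ Ioi (0 : ℝ), 0 < w t x)
    (hPDE : ∀ t : ℝ, ∀ x ∈ Ioi (0 : ℝ),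
      deriv (fun s => w s x) t
        = deriv (fun y => deriv (fun z => w t z) y) x
          + δ * x ^ k * w t x ^ m + a2 / x ^ 2 * w t x)
    (v : ℝ → ℝ → ℝ)
    (hv : ∀ t : ℝ, ∀ x : ℝ,
      v t x = Real.exp (-(β / 2) * x ^ 2 - 2 * β * ((k + 2) / (m - 1)) * t)
        * w (-(Real.exp (-(4 * β * t))) / (4 * β)) (Real.exp (-(2 * β * t)) * x)) :
    ∀ t : ℝ, ∀ x ∈ Ioi (0 : ℝ),
      deriv (fun s => v s x) t
        = deriv (fun y => deriv (fun z => v t z) y) x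
          + δ * x ^ k * Real.exp (p * x ^ 2) * v t x ^ m
          + (-β ^ 2 * x ^ 2 + β * (2 * k + 5 - m) / (1 - m) + a2 / x ^ 2) * v t x := by
  intro t x hx
  have hx0 : (0:ℝ) < x := hx
  have hm1' : m - 1 ≠ 0 := sub_ne_zero.mpr hm1
  have hβ0 : β ≠ 0 := by
    rw [hβ]
    exact div_ne_zero (by simpa using hp) hm1'
  set γ : ℝ := 2 * β * ((k + 2) / (m - 1)) with hγ
  set c : ℝ := Real.exp (-(2 * β * t)) with hc
  set τ : ℝ := -(Real.exp (-(4 * β * t))) / (4 * β) with hτ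
  have hc0 : 0 < c := by rw [hc]; exact Real.exp_pos _
  have hcx0 : 0 < c * x := mul_pos hc0 hx0
  -- smoothness of the slice
  have hωc : ContDiffOn ℝ (⊤ : ℕ∞) (w τ) (Ioi 0) := by
    have h1 : ContDiffOn ℝ (⊤ : ℕ∞) (fun z : ℝ => (τ, z)) (Ioi 0) :=
      (contDiff_const.prodMk contDiff_id).contDiffOn
    exact hw.comp h1 (fun z hz => ⟨mem_univ _, hz⟩)
  have hω'c : ContDiffOn ℝ (⊤ : ℕ∞) (deriv (w τ)) (Ioi 0) :=
    hωc.deriv_of_isOpen isOpen_Ioi (by simp)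
  have hωd : ∀ y ∈ Ioi (0:ℝ), DifferentiableAt ℝ (w τ) y := fun y hy =>
    (hωc.differentiableOn (by simp)).differentiableAt (isOpen_Ioi.mem_nhds hy)
  have hω'd : ∀ y ∈ Ioi (0:ℝ), DifferentiableAt ℝ (deriv (w τ)) y := fun y hy =>
    (hω'c.differentiableOn (by simp)).differentiableAt (isOpen_Ioi.mem_nhds hy)
  -- joint derivative at (τ, c*x)
  have hΩ : IsOpen ((univ : Set ℝ) ×ˢ Ioi (0:ℝ)) := isOpen_univ.prod isOpen_Ioi
  have hjd : DifferentiableAt ℝ (Function.uncurry w) (τ, c * x) :=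
    (hw.differentiableOn (by simp)).differentiableAt (hΩ.mem_nhds ⟨mem_univ _, hcx0⟩)
  set f := fderiv ℝ (Function.uncurry w) (τ, c * x) with hfdef
  have hF : HasFDerivAt (Function.uncurry w) f (τ, c * x) := hjd.hasFDerivAt
  have h10 : HasDerivAt (fun s => w s (c * x)) (f (1, 0)) τ :=
    by have h := hF.comp_hasDerivAt τ ((hasDerivAt_id τ).prodMk (hasDerivAt_const τ (c * x))); exact h
  have h01 : HasDerivAt (w τ) (f (0, 1)) (c * x) :=
    hF.comp_hasDerivAt (c * x) ((hasDerivAt_const (c * x) τ).prodMk (hasDerivAt_id (c * x)))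
  have hf10 : f (1, 0)
      = deriv (deriv (w τ)) (c * x) + δ * (c * x) ^ k * w τ (c * x) ^ m
        + a2 / (c * x) ^ 2 * w τ (c * x) := by
    rw [← h10.deriv]; exact hPDE τ (c * x) hcx0
  have hf01 : f (0, 1) = deriv (w τ) (c * x) := h01.deriv.symm
  -- time derivative of v (· , x)
  have hT : HasDerivAt (fun s : ℝ => -(Real.exp (-(4 * β * s))) / (4 * β))
      (Real.exp (-(4 * β * t))) t := by
    have h1 : HasDerivAt (fun s : ℝ => -(4 * β * s)) (-(4 * β)) t := by
      exact ((hasDerivAt_id' t).const_mul (4 * β)).neg.congr_deriv (by ring)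
    have h2 := (h1.exp.neg).div_const (4 * β)
    refine h2.congr_deriv ?_
    rw [div_eq_iff (mul_ne_zero four_ne_zero hβ0)]; ring
  have hXt : HasDerivAt (fun s : ℝ => Real.exp (-(2 * β * s)) * x)
      (Real.exp (-(2 * β * t)) * -(2 * β) * x) t := by
    have h1 : HasDerivAt (fun s : ℝ => -(2 * β * s)) (-(2 * β)) t := by
      exact ((hasDerivAt_id' t).const_mul (2 * β)).neg.congr_deriv (by ring)
    exact h1.exp.mul_const x
  have hWt : HasDerivAt (fun s => w (-(Real.exp (-(4 * β * s))) / (4 * β))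
        (Real.exp (-(2 * β * s)) * x))
      (f (Real.exp (-(4 * β * t)), Real.exp (-(2 * β * t)) * -(2 * β) * x)) t := by
    have hF' : HasFDerivAt (Function.uncurry w) f
        (-(Real.exp (-(4 * β * t))) / (4 * β), Real.exp (-(2 * β * t)) * x) := by
      rw [← hτ, ← hc]; exact hF
    exact hF'.comp_hasDerivAt t (hT.prodMk hXt)
  have hE_t : HasDerivAt (fun s : ℝ => Real.exp (-(β / 2) * x ^ 2 - γ * s))
      (Real.exp (-(β / 2) * x ^ 2 - γ * t) * -γ) t := by
    have h1 : HasDerivAt (fun s : ℝ => -(β / 2) * x ^ 2 - γ * s) (-γ) t := by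
      have h0 := ((hasDerivAt_id t).const_mul γ).const_sub (-(β / 2) * x ^ 2)
      simp only [id_eq, mul_one] at h0
      exact h0
    exact h1.exp
  have hlin : f (Real.exp (-(4 * β * t)), Real.exp (-(2 * β * t)) * -(2 * β) * x)
      = Real.exp (-(4 * β * t)) * f (1, 0)
        + (Real.exp (-(2 * β * t)) * -(2 * β) * x) * f (0, 1) := by
    have hpt : (Real.exp (-(4 * β * t)), Real.exp (-(2 * β * t)) * -(2 * β) * x)
        = Real.exp (-(4 * β * t)) • ((1:ℝ), (0:ℝ))
          + (Real.exp (-(2 * β * t)) * -(2 * β) * x) • ((0:ℝ), (1:ℝ)) := by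
      simp [Prod.ext_iff]
    rw [hpt, map_add, map_smul, map_smul, smul_eq_mul, smul_eq_mul]
  have hVt : HasDerivAt (fun s => v s x)
      (Real.exp (-(β / 2) * x ^ 2 - γ * t) * -γ * w τ (c * x)
        + Real.exp (-(β / 2) * x ^ 2 - γ * t)
          * (Real.exp (-(4 * β * t)) * f (1, 0)
            + (Real.exp (-(2 * β * t)) * -(2 * β) * x) * f (0, 1))) t := by
    have h := hE_t.mul hWt
    rw [hlin] at h
    have h2 := h.congr_of_eventuallyEq (Filter.Eventually.of_forall fun s => hv s x)
    convert h2 using 1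
  -- spatial derivatives
  have hv' : ∀ z : ℝ, v t z
      = Real.exp (-(β / 2) * z ^ 2 - γ * t) * w τ (c * z) := by
    intro z
    rw [hv t z, hτ, hc]
  have hfirst : ∀ y ∈ Ioi (0:ℝ), HasDerivAt (fun z => v t z)
      (Real.exp (-(β / 2) * y ^ 2 - γ * t)
        * (-β * y * w τ (c * y) + c * deriv (w τ) (c * y))) y := by
    intro y hy
    have hcy0 : 0 < c * y := mul_pos hc0 hy
    have hEy : HasDerivAt (fun z : ℝ => Real.exp (-(β / 2) * z ^ 2 - γ * t))
        (Real.exp (-(β / 2) * y ^ 2 - γ * t) * (-β * y)) y := by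
      have h1 : HasDerivAt (fun z : ℝ => -(β / 2) * z ^ 2 - γ * t) (-β * y) y := by
        have h0 := ((hasDerivAt_pow 2 y).const_mul (-(β / 2))).sub_const (γ * t)
        refine h0.congr_deriv ?_
        norm_num; ring
      exact h1.exp
    have hin : HasDerivAt (fun z : ℝ => c * z) c y := by
      simpa using (hasDerivAt_id y).const_mul c
    have hwz : HasDerivAt (fun z => w τ (c * z)) (deriv (w τ) (c * y) * c) y :=
      ((hωd _ hcy0).hasDerivAt).comp y hin
    have h := hEy.mul hwz
    have h2 := h.congr_of_eventuallyEq (Filter.Eventually.of_forall fun z => hv' z)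
    refine h2.congr_deriv ?_
    ring
  have hin' : HasDerivAt (fun z : ℝ => c * z) c x := by
    simpa using (hasDerivAt_id x).const_mul c
  have hsecond : HasDerivAt (fun y => Real.exp (-(β / 2) * y ^ 2 - γ * t)
        * (-β * y * w τ (c * y) + c * deriv (w τ) (c * y)))
      (Real.exp (-(β / 2) * x ^ 2 - γ * t) * (-β * x)
          * (-β * x * w τ (c * x) + c * deriv (w τ) (c * x))
        + Real.exp (-(β / 2) * x ^ 2 - γ * t)
          * (-β * w τ (c * x) + -β * x * (deriv (w τ) (c * x) * c)
            + c * (deriv (deriv (w τ)) (c * x) * c))) x := by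
    have hEx : HasDerivAt (fun z : ℝ => Real.exp (-(β / 2) * z ^ 2 - γ * t))
        (Real.exp (-(β / 2) * x ^ 2 - γ * t) * (-β * x)) x := by
      have h1 : HasDerivAt (fun z : ℝ => -(β / 2) * z ^ 2 - γ * t) (-β * x) x := by
        have h0 := ((hasDerivAt_pow 2 x).const_mul (-(β / 2))).sub_const (γ * t)
        refine h0.congr_deriv ?_
        norm_num; ring
      exact h1.exp
    have hlinx : HasDerivAt (fun y : ℝ => -β * y) (-β) x := by
      simpa using (hasDerivAt_id x).const_mul (-β)
    have hwzx : HasDerivAt (fun z => w τ (c * z)) (deriv (w τ) (c * x) * c) x :=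
      ((hωd _ hcx0).hasDerivAt).comp x hin'
    have hA : HasDerivAt (fun y => -β * y * w τ (c * y))
        (-β * w τ (c * x) + -β * x * (deriv (w τ) (c * x) * c)) x := hlinx.mul hwzx
    have hB : HasDerivAt (fun y => c * deriv (w τ) (c * y))
        (c * (deriv (deriv (w τ)) (c * x) * c)) x :=
      (((hω'd _ hcx0).hasDerivAt).comp x hin').const_mul c
    exact hEx.mul (hA.add hB)
  have hderiv2 : deriv (fun y => deriv (fun z => v t z) y) x
      = Real.exp (-(β / 2) * x ^ 2 - γ * t) * (-β * x)
          * (-β * x * w τ (c * x) + c * deriv (w τ) (c * x))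
        + Real.exp (-(β / 2) * x ^ 2 - γ * t)
          * (-β * w τ (c * x) + -β * x * (deriv (w τ) (c * x) * c)
            + c * (deriv (deriv (w τ)) (c * x) * c)) := by
    have hev : (fun y => deriv (fun z => v t z) y) =ᶠ[nhds x]
        (fun y => Real.exp (-(β / 2) * y ^ 2 - γ * t)
          * (-β * y * w τ (c * y) + c * deriv (w τ) (c * y))) :=
      Filter.eventually_of_mem (isOpen_Ioi.mem_nhds hx0) (fun y hy => (hfirst y hy).deriv)
    rw [hev.deriv_eq, hsecond.deriv]
  -- algebraic facts
  have hW0 : 0 < w τ (c * x) := hwpos τ _ hcx0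
  have he4 : Real.exp (-(4 * β * t)) = c * c := by
    rw [hc, ← Real.exp_add]; congr 1; ring
  have hXk : (c * x) ^ k = c ^ k * x ^ k := Real.mul_rpow hc0.le hx0.le
  have haux3 : c * c * (a2 / (c * x) ^ 2) = a2 / x ^ 2 := by
    rw [mul_pow]; field_simp
  have h1m : (1:ℝ) - m ≠ 0 := by intro h; apply hm1; linarith
  have hQγ : -γ = -β + β * (2 * k + 5 - m) / (1 - m) := by
    rw [hγ]; field_simp; ring
  have hck : c ^ k = Real.exp (-(2 * β * t) * k) := by rw [hc, ← Real.exp_mul]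
  have hEm : Real.exp (-(β / 2) * x ^ 2 - γ * t) ^ m
      = Real.exp ((-(β / 2) * x ^ 2 - γ * t) * m) := by rw [← Real.exp_mul]
  have hexps : (-(β / 2) * x ^ 2 - γ * t) + (-(2 * β * t) + -(2 * β * t)) + -(2 * β * t) * k
      = p * x ^ 2 + (-(β / 2) * x ^ 2 - γ * t) * m := by
    rw [hγ, hβ]; field_simp; ring
  have key : Real.exp (-(β / 2) * x ^ 2 - γ * t) * (c * c) * (c ^ k * x ^ k)
      = x ^ k * Real.exp (p * x ^ 2) * Real.exp (-(β / 2) * x ^ 2 - γ * t) ^ m := by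
    calc Real.exp (-(β / 2) * x ^ 2 - γ * t) * (c * c) * (c ^ k * x ^ k)
        = Real.exp ((-(β / 2) * x ^ 2 - γ * t) + (-(2 * β * t) + -(2 * β * t))
            + -(2 * β * t) * k) * x ^ k := by
          rw [hck, hc, Real.exp_add, Real.exp_add, Real.exp_add]; ring
      _ = Real.exp (p * x ^ 2 + (-(β / 2) * x ^ 2 - γ * t) * m) * x ^ k := by rw [hexps]
      _ = x ^ k * Real.exp (p * x ^ 2) * Real.exp (-(β / 2) * x ^ 2 - γ * t) ^ m := by
          rw [Real.exp_add, hEm]; ring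
  rw [hVt.deriv, hderiv2, hf10, hf01, hv' x, he4, hXk,
    Real.mul_rpow (Real.exp_pos _).le hW0.le, ← hc]
  linear_combination (Real.exp (-(β / 2) * x ^ 2 - γ * t) * w τ (c * x)) * hQγ
    + (Real.exp (-(β / 2) * x ^ 2 - γ * t) * w τ (c * x)) * haux3
    + (δ * w τ (c * x) ^ m) * key
end

section
/- Additional equivalence transformation (28) mapping case 2.2 to case 2.1 of the classification of the initial class. Let m be real with m≠0,1 and δ a nonzero real constant. If u: ℝ×ℝ → (0,∞) is smooth and satisfies e^x u_t(t,x) = ∂_x( e^x u_x(t,x) ) + δ e^x u(t,x)^m for all (t,x) ∈ ℝ×ℝ, then the function ũ defined by ũ(t,y) = u(t, y−t) satisfies ũ_t(t,y) = ũ_{yy}(t,y) + δ ũ(t,y)^m for all (t,y) ∈ ℝ×ℝ. -/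
open Real Set

/-- Additional equivalence transformation (28) mapping case 2.2 to case 2.1 of the
classification of the initial class. -/
theorem additional_equivalence_case22_to_case21
    (m δ : ℝ) (hm0 : m ≠ 0) (hm1 : m ≠ 1) (hδ : δ ≠ 0)
    (u : ℝ → ℝ → ℝ) (hu : ContDiff ℝ (⊤ : ℕ∞) (Function.uncurry u))
    (hupos : ∀ t x : ℝ, 0 < u t x)
    (hPDE : ∀ t x : ℝ,
      Real.exp x * deriv (fun s => u s x) t
        = deriv (fun y => Real.exp y * deriv (fun z => u t z) y) x
          + δ * Real.exp x * u t x ^ m)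
    (util : ℝ → ℝ → ℝ)
    (hutil : ∀ t y : ℝ, util t y = u t (y - t)) :
    ∀ t y : ℝ,
      deriv (fun s => util s y) t
        = deriv (fun z => deriv (fun z' => util t z') z) y + δ * util t y ^ m := by
  intro t y
  set F := Function.uncurry u with hF
  have hFd : Differentiable ℝ F := hu.differentiable (by simp)
  -- partial derivative in the second variable
  have hB : ∀ a b : ℝ, HasDerivAt (fun z => u a z) (fderiv ℝ F (a, b) (0, 1)) b := by
    intro a b
    have h1 : HasDerivAt (fun z => ((a, z) : ℝ × ℝ)) ((0 : ℝ), (1 : ℝ)) b :=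
      (hasDerivAt_const b a).prodMk (hasDerivAt_id b)
    have h2 := (hFd (a, b)).hasFDerivAt.comp_hasDerivAt b h1
    simpa [F, Function.uncurry, Function.comp_def] using h2
  -- partial derivative in the first variable
  have hA : ∀ a b : ℝ, HasDerivAt (fun s => u s b) (fderiv ℝ F (a, b) (1, 0)) a := by
    intro a b
    have h1 : HasDerivAt (fun s => ((s, b) : ℝ × ℝ)) ((1 : ℝ), (0 : ℝ)) a :=
      (hasDerivAt_id a).prodMk (hasDerivAt_const a b)
    have h2 := (hFd (a, b)).hasFDerivAt.comp_hasDerivAt a h1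
    simpa [F, Function.uncurry, Function.comp_def] using h2
  -- u_x as a smooth function of both variables
  have hGc : ContDiff ℝ (⊤ : ℕ∞) (fun p : ℝ × ℝ => fderiv ℝ F p (0, 1)) :=
    (hu.fderiv_right (by simp)).clm_apply contDiff_const
  have hGd : Differentiable ℝ (fun p : ℝ × ℝ => fderiv ℝ F p (0, 1)) :=
    hGc.differentiable (by simp)
  have hux_diff : ∀ a : ℝ, Differentiable ℝ (fun z => fderiv ℝ F (a, z) (0, 1)) := by
    intro a
    exact hGd.comp ((differentiable_const a).prodMk differentiable_id)
  set x0 := y - t with hx0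
  set vxx := deriv (fun z => fderiv ℝ F (t, z) (0, 1)) x0 with hvxx
  -- PDE at (t, x0): expand the flux derivative via the product rule
  have hux_eq : ∀ z : ℝ, deriv (fun w => u t w) z = fderiv ℝ F (t, z) (0, 1) := by
    intro z; exact (hB t z).deriv
  have hGx : HasDerivAt (fun z => fderiv ℝ F (t, z) (0, 1)) vxx x0 :=
    ((hux_diff t) x0).hasDerivAt
  have hprod : HasDerivAt (fun z => Real.exp z * deriv (fun w => u t w) z)
      (Real.exp x0 * (fderiv ℝ F (t, x0) (0, 1)) + Real.exp x0 * vxx) x0 := by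
    simp only [hux_eq]
    exact (Real.hasDerivAt_exp x0).mul hGx
  have hPDE' := hPDE t x0
  rw [hprod.deriv] at hPDE'
  -- divide by exp x0
  have hkey : deriv (fun s => u s x0) t
      = fderiv ℝ F (t, x0) (0, 1) + vxx + δ * u t x0 ^ m := by
    have he : Real.exp x0 ≠ 0 := (Real.exp_pos x0).ne'
    have h2 : Real.exp x0 * deriv (fun s => u s x0) t
        = Real.exp x0 * (fderiv ℝ F (t, x0) (0, 1) + vxx + δ * u t x0 ^ m) := by
      linear_combination hPDE'
    exact mul_left_cancel₀ he h2
  -- LHS: time derivative of util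
  have hcurve : HasDerivAt (fun s => ((s, y - s) : ℝ × ℝ)) ((1 : ℝ), (-1 : ℝ)) t :=
    (hasDerivAt_id t).prodMk ((hasDerivAt_id t).const_sub y)
  have hL : HasDerivAt (fun s => u s (y - s)) (fderiv ℝ F (t, x0) (1, -1)) t := by
    have h2 := (hFd (t, y - t)).hasFDerivAt.comp_hasDerivAt t hcurve
    simpa [F, Function.uncurry, hx0, Function.comp_def] using h2
  have hlin : fderiv ℝ F (t, x0) (1, -1)
      = fderiv ℝ F (t, x0) (1, 0) - fderiv ℝ F (t, x0) (0, 1) := by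
    have : ((1 : ℝ), (-1 : ℝ)) = ((1 : ℝ), (0 : ℝ)) - ((0 : ℝ), (1 : ℝ)) := by
      simp [Prod.ext_iff]
    rw [this, map_sub]
  -- RHS inner derivative
  have hshift : ∀ z : ℝ, HasDerivAt (fun z' => u t (z' - t))
      (fderiv ℝ F (t, z - t) (0, 1)) z := by
    intro z
    have h1 : HasDerivAt (fun z' : ℝ => z' - t) 1 z := (hasDerivAt_id z).sub_const t
    have h2 := (hB t (z - t)).comp z h1
    simpa [Function.comp_def] using h2
  have hinner : ∀ z : ℝ, deriv (fun z' => u t (z' - t)) z = fderiv ℝ F (t, z - t) (0, 1) := by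
    intro z; exact (hshift z).deriv
  have houter : HasDerivAt (fun z => fderiv ℝ F (t, z - t) (0, 1)) vxx y := by
    have h1 : HasDerivAt (fun z : ℝ => z - t) 1 y := (hasDerivAt_id y).sub_const t
    have h2 := hGx.comp y h1
    simpa [hx0, Function.comp_def] using h2
  simp only [hutil]
  rw [hL.deriv]
  simp only [hinner]
  rw [houter.deriv, hlin]
  have hut : deriv (fun s => u s x0) t = fderiv ℝ F (t, x0) (1, 0) := (hA t x0).deriv
  rw [hut] at hkey
  linarith
end

section
/- Lie symmetry flow of case 2 of the classification of the imaged class (operator ∂_x + αv∂_v with α=q/(1−m)). Let m be real with m≠0,1, let δ, q, a1 be real constants and α = q/(1−m). If v: ℝ×ℝ → (0,∞) is smooth and satisfies v_t = v_{xx} + δ e^{qx} v^m + a1 v on ℝ×ℝ, then for every s ∈ ℝ the function ṽ(t,x) := e^{αs} v(t, x−s) also satisfies ṽ_t = ṽ_{xx} + δ e^{qx} ṽ^m + a1 ṽ on ℝ×ℝ. -/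
open Real Set

/-- Lie symmetry flow of case 2 of the classification of the imaged class
(operator `∂_x + αv∂_v` with `α = q/(1−m)`). -/
theorem lie_flow_case2
    (m δ q a1 : ℝ) (hm0 : m ≠ 0) (hm1 : m ≠ 1)
    (α : ℝ) (hα : α = q / (1 - m))
    (v : ℝ → ℝ → ℝ) (hv : ContDiff ℝ (⊤ : ℕ∞) (Function.uncurry v))
    (hvpos : ∀ t x : ℝ, 0 < v t x)
    (hPDE : ∀ t x : ℝ,
      deriv (fun s => v s x) t
        = deriv (fun y => deriv (fun z => v t z) y) x
          + δ * Real.exp (q * x) * v t x ^ m + a1 * v t x) :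
    ∀ s : ℝ, ∀ vtil : ℝ → ℝ → ℝ,
      (∀ t x : ℝ, vtil t x = Real.exp (α * s) * v t (x - s)) →
      ∀ t x : ℝ,
        deriv (fun τ => vtil τ x) t
          = deriv (fun y => deriv (fun z => vtil t z) y) x
            + δ * Real.exp (q * x) * vtil t x ^ m + a1 * vtil t x := by
  intro s vtil hvt t x
  set c := Real.exp (α * s) with hc
  have hc0 : 0 < c := Real.exp_pos _
  -- slices are smooth
  have hslx : ∀ t : ℝ, ContDiff ℝ (⊤ : ℕ∞) (v t) := by
    intro t
    have : (fun x => Function.uncurry v (t, x)) = v t := rfl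
    exact this ▸ hv.comp (contDiff_const.prodMk contDiff_id)
  have hslt : ∀ x : ℝ, ContDiff ℝ (⊤ : ℕ∞) (fun τ => v τ x) := by
    intro x
    have : (fun τ => Function.uncurry v (τ, x)) = fun τ => v τ x := rfl
    exact this ▸ hv.comp (contDiff_id.prodMk contDiff_const)
  have hdx : Differentiable ℝ (v t) := (hslx t).differentiable (by simp)
  have hddx : Differentiable ℝ (deriv (v t)) :=
    ((contDiff_infty_iff_deriv.mp ((hslx t).of_le (by simp))).2).differentiable (by simp)
  -- time derivative
  have hT : deriv (fun τ => vtil τ x) t = c * deriv (fun τ => v τ (x - s)) t := by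
    have he : (fun τ => vtil τ x) = fun τ => c * v τ (x - s) :=
      funext fun τ => hvt τ x
    rw [he, deriv_const_mul _ (((hslt (x - s)).differentiable (by simp)) t)]
  -- first space derivative as a function
  have hX1 : ∀ y : ℝ, deriv (fun z => vtil t z) y = c * deriv (v t) (y - s) := by
    intro y
    have he : (fun z => vtil t z) = fun z => c * v t (z - s) :=
      funext fun z => hvt t z
    have hdiff : DifferentiableAt ℝ (fun z => v t (z - s)) y :=
      (hdx _).comp y (differentiableAt_id.sub_const s)
    rw [he, deriv_const_mul _ hdiff, deriv_comp_sub_const]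
  -- second space derivative
  have hX2 : deriv (fun y => deriv (fun z => vtil t z) y) x
      = c * deriv (deriv (v t)) (x - s) := by
    have he : (fun y => deriv (fun z => vtil t z) y)
        = fun y => c * deriv (v t) (y - s) := funext hX1
    have hdiff : DifferentiableAt ℝ (fun y => deriv (v t) (y - s)) x :=
      (hddx _).comp x (differentiableAt_id.sub_const s)
    rw [he, deriv_const_mul _ hdiff, deriv_comp_sub_const]
  -- exponent identity
  have hkey : Real.exp (q * x) * c ^ m = Real.exp (q * (x - s)) * c := by
    rw [hc, ← Real.exp_mul, ← Real.exp_add, ← Real.exp_add]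
    congr 1
    have h1m : (1 : ℝ) - m ≠ 0 := sub_ne_zero.mpr (Ne.symm hm1)
    rw [hα]; field_simp
    ring
  have hP := hPDE t (x - s)
  rw [hT, hX2, hvt t x]
  rw [Real.mul_rpow hc0.le (hvpos t (x - s)).le]
  calc c * deriv (fun τ => v τ (x - s)) t
      = c * (deriv (fun y => deriv (fun z => v t z) y) (x - s)
          + δ * Real.exp (q * (x - s)) * v t (x - s) ^ m + a1 * v t (x - s)) := by
        rw [hP]
    _ = c * deriv (deriv (v t)) (x - s)
          + δ * (Real.exp (q * (x - s)) * c) * v t (x - s) ^ m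
          + a1 * (c * v t (x - s)) := by
        have : (fun y => deriv (fun z => v t z) y) = deriv (v t) := rfl
        rw [this]; ring
    _ = c * deriv (deriv (v t)) (x - s)
          + δ * Real.exp (q * x) * (c ^ m * v t (x - s) ^ m)
          + a1 * (c * v t (x - s)) := by rw [← hkey]; ring
end

section
/- Generalized traveling-wave (KPP-type) solution (53) of v_t = v_{xx} + δv^m + εv. Let m be real with m≠0, m≠1, m≠−1, let δ and ε be real constants with ε ≠ 0, and let λ, μ, β, C be real constants satisfying λ = ε(1−m)(m+3)/(2(m+1)), μ² = ε(1−m)²/(2(m+1)), and β² = −δ/ε. Let Ω ⊆ ℝ×ℝ be an open set on which β + C·exp(λt + μx) > 0. Then the function v(t,x) = ( β + C·exp(λt + μx) )^{2/(1−m)} satisfies v_t = v_{xx} + δ·v^m + ε·v at every point of Ω. -/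
open Real Set

/-!
Write `W = β + C e^{λt+μx}` and `E = W - β`, so that `W_t = λE`, `W_x = μE` and
`W_xx = μ²E`. For `v = W^p` with `p = 2/(1-m)` we have `p m = p - 2`, hence
`v^m = W^{p-2}`, and both sides of the equation become `W^{p-2}` times a polynomial
in `β` and `E`; the relations between `λ`, `μ`, `β`, `δ`, `ε` are exactly those making
the two polynomials coincide. Positivity of `W` at a point persists on a neighbourhood
by continuity, which is all the second derivative needs.
-/

theorem hasDerivAt_rpow_add_mul_exp {g : ℝ → ℝ} {g' s : ℝ} (β C p : ℝ)
    (hg : HasDerivAt g g' s) (hpos : 0 < β + C * exp (g s)) :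
    HasDerivAt (fun s => (β + C * exp (g s)) ^ p)
      (p * (β + C * exp (g s)) ^ (p - 1) * (C * exp (g s) * g')) s := by
  have hW : HasDerivAt (fun s => β + C * exp (g s)) (C * (exp (g s) * g')) s :=
    (hg.exp.const_mul C).const_add β
  convert hW.rpow_const (p := p) (Or.inl hpos.ne') using 1
  ring

theorem deriv_deriv_rpow_add_mul_exp (β C c a p x : ℝ) (hpos : 0 < β + C * exp (c + a * x)) :
    deriv (deriv fun z => (β + C * exp (c + a * z)) ^ p) x
      = p * (p - 1) * (β + C * exp (c + a * x)) ^ (p - 2) * (C * exp (c + a * x)) ^ 2 * a ^ 2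
        + p * (β + C * exp (c + a * x)) ^ (p - 1) * (C * exp (c + a * x)) * a ^ 2 := by
  have hlin (z : ℝ) : HasDerivAt (fun z => c + a * z) a z := by
    simpa using ((hasDerivAt_id z).const_mul a).const_add c
  have hcont : Continuous fun z => β + C * exp (c + a * z) := by fun_prop
  have hpos_near : ∀ᶠ z in nhds x, 0 < β + C * exp (c + a * z) :=
    continuousAt_const.eventually_lt hcont.continuousAt hpos
  have hderiv : (deriv fun z => (β + C * exp (c + a * z)) ^ p) =ᶠ[nhds x]
      fun z => p * ((β + C * exp (c + a * z)) ^ (p - 1) * (C * exp (c + a * z) * a)) := by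
    filter_upwards [hpos_near] with z hz
    rw [(hasDerivAt_rpow_add_mul_exp β C p (hlin z) hz).deriv, mul_assoc]
  have hE : HasDerivAt (fun z => C * exp (c + a * z) * a) (C * (exp (c + a * x) * a) * a) x :=
    ((hlin x).exp.const_mul C).mul_const a
  have hW := hasDerivAt_rpow_add_mul_exp β C (p - 1) (hlin x) hpos
  rw [hderiv.deriv_eq]
  refine ((hW.mul hE).const_mul p).deriv.trans ?_
  rw [sub_sub, one_add_one_eq_two]
  ring

theorem kpp_profile_balance {m δ ε lam μ β E : ℝ}
    (hm1 : m ≠ 1) (hm1' : m ≠ -1) (hε : ε ≠ 0)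
    (hlam : lam = ε * (1 - m) * (m + 3) / (2 * (m + 1)))
    (hμ : μ ^ 2 = ε * (1 - m) ^ 2 / (2 * (m + 1)))
    (hβ : β ^ 2 = -δ / ε) (hW : 0 < β + E) :
    2 / (1 - m) * (β + E) ^ (2 / (1 - m) - 1) * E * lam
      = 2 / (1 - m) * (2 / (1 - m) - 1) * (β + E) ^ (2 / (1 - m) - 2) * E ^ 2 * μ ^ 2
        + 2 / (1 - m) * (β + E) ^ (2 / (1 - m) - 1) * E * μ ^ 2
        + δ * ((β + E) ^ (2 / (1 - m))) ^ m + ε * (β + E) ^ (2 / (1 - m)) := by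
  have h1m : 1 - m ≠ 0 := sub_ne_zero.mpr (Ne.symm hm1)
  have hm1p : m + 1 ≠ 0 := fun h => hm1' (eq_neg_of_add_eq_zero_left h)
  set p := 2 / (1 - m) with hp
  set X := (β + E) ^ (p - 2)
  have hpm : p * m = p - 2 := by rw [hp]; field_simp; ring
  have hpow_sub_one : (β + E) ^ (p - 1) = X * (β + E) := by
    rw [← rpow_add_one hW.ne']; ring_nf
  have hpow : (β + E) ^ p = X * (β + E) ^ 2 := by
    rw [← rpow_natCast, ← rpow_add hW]; norm_num
  have hpow_m : ((β + E) ^ p) ^ m = X := by rw [← rpow_mul hW.le, hpm]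
  have hδ : δ = -(ε * β ^ 2) := by rw [hβ]; field_simp
  rw [hpow_m, hpow_sub_one, hpow, hlam, hμ, hδ, hp]
  field_simp
  ring

theorem kpp_type_solution_general
    (m δ ε lam μ β C : ℝ)
    (hm1 : m ≠ 1) (hm1' : m ≠ -1) (hε : ε ≠ 0)
    (hlam : lam = ε * (1 - m) * (m + 3) / (2 * (m + 1)))
    (hμ : μ ^ 2 = ε * (1 - m) ^ 2 / (2 * (m + 1)))
    (hβ : β ^ 2 = -δ / ε)
    (Ω : Set (ℝ × ℝ))
    (hpos : ∀ p ∈ Ω, 0 < β + C * Real.exp (lam * p.1 + μ * p.2))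
    (v : ℝ → ℝ → ℝ)
    (hv : ∀ t x : ℝ, v t x = (β + C * Real.exp (lam * t + μ * x)) ^ (2 / (1 - m))) :
    ∀ p ∈ Ω,
      deriv (fun s => v s p.2) p.1
        = deriv (fun y => deriv (fun z => v p.1 z) y) p.2
          + δ * v p.1 p.2 ^ m + ε * v p.1 p.2 := by
  rintro ⟨t, x⟩ hp
  obtain rfl := funext₂ hv
  have hW := hpos (t, x) hp
  have hlin : HasDerivAt (fun s => lam * s + μ * x) lam t := by
    simpa using ((hasDerivAt_id t).const_mul lam).add_const (μ * x)
  rw [(hasDerivAt_rpow_add_mul_exp β C _ hlin hW).deriv,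
    deriv_deriv_rpow_add_mul_exp β C (lam * t) μ _ x hW, ← mul_assoc]
  exact kpp_profile_balance hm1 hm1' hε hlam hμ hβ hW

/-- Generalized traveling-wave (KPP-type) solution (53) of
`v_t = v_{xx} + δv^m + εv`. -/
theorem kpp_type_solution
    (m δ ε lam μ β C : ℝ)
    (hm0 : m ≠ 0) (hm1 : m ≠ 1) (hm1' : m ≠ -1) (hε : ε ≠ 0)
    (hlam : lam = ε * (1 - m) * (m + 3) / (2 * (m + 1)))
    (hμ : μ ^ 2 = ε * (1 - m) ^ 2 / (2 * (m + 1)))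
    (hβ : β ^ 2 = -δ / ε)
    (Ω : Set (ℝ × ℝ)) (hΩ : IsOpen Ω)
    (hpos : ∀ p ∈ Ω, 0 < β + C * Real.exp (lam * p.1 + μ * p.2))
    (v : ℝ → ℝ → ℝ)
    (hv : ∀ t x : ℝ, v t x = (β + C * Real.exp (lam * t + μ * x)) ^ (2 / (1 - m))) :
    ∀ p ∈ Ω,
      deriv (fun s => v s p.2) p.1
        = deriv (fun y => deriv (fun z => v p.1 z) y) p.2
          + δ * v p.1 p.2 ^ m + ε * v p.1 p.2 :=
  kpp_type_solution_general m δ ε lam μ β C hm1 hm1' hε hlam hμ hβ Ω hpos v hv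
end

section
/- Tanh-form of the traveling-wave solution (54) of the generalized Fisher equation. Let m be a real constant with m > 1. Then the function v(t,x) = ( 1/2 − (1/2)·tanh( ((m−1)/(2√(2m+2)))·( x − (m+3)t/√(2m+2) ) ) )^{2/(m−1)} satisfies v_t(t,x) = v_{xx}(t,x) + v(t,x) − v(t,x)^m for all (t,x) ∈ ℝ×ℝ. -/
open Real

/-!
Since `1/2 - 1/2 tanh u = 1/(1 + exp (2u))`, the function is the travelling front
`v t x = φ (b (x - c t))` with profile `φ z = (1 + exp z) ^ (-p)`, `p = 2/(m-1)`,
`b = (m-1)/√(2m+2)` and speed `c = (m+3)/√(2m+2)`. The equation reduces to the profile ODE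
`b² φ'' + b c φ' + φ - φ^m = 0`. With `W = exp z`, `U = 1 + W` and `p m = p + 2`, every term
is `U^(-p-2) W` times a polynomial of degree one in `W`, and its two coefficients vanish for
exactly these `b²` and `b c`.
-/

theorem one_half_sub_half_mul_tanh (u : ℝ) :
    1 / 2 - 1 / 2 * tanh u = (1 + exp (2 * u))⁻¹ := by
  rw [tanh_eq_sinh_div_cosh, sinh_eq, cosh_eq, show 2 * u = u + u by ring, exp_add, exp_neg]
  have : exp u ≠ 0 := (exp_pos u).ne'
  field_simp
  ring

theorem hasDerivAt_one_add_exp_rpow (k z : ℝ) :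
    HasDerivAt (fun z => (1 + exp z) ^ k) (k * (1 + exp z) ^ (k - 1) * exp z) z := by
  convert ((hasDerivAt_exp z).const_add 1).rpow_const (p := k) (Or.inl (by positivity)) using 1
  ring

theorem hasDerivAt_deriv_one_add_exp_rpow (k z : ℝ) :
    HasDerivAt (fun z => k * (1 + exp z) ^ (k - 1) * exp z)
      (k * (1 + exp z) ^ (k - 2) * exp z * (1 + k * exp z)) z := by
  have hU : 0 < 1 + exp z := by positivity
  refine (((hasDerivAt_one_add_exp_rpow (k - 1) z).const_mul k).mul
    (hasDerivAt_exp z)).congr_deriv ?_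
  rw [show k - 1 - 1 = k - 2 by ring, show k - 1 = k - 2 + 1 by ring, rpow_add hU, rpow_one]
  ring

theorem travelingWave_solves (F : ℝ → ℝ) {f f' f'' : ℝ → ℝ} (b c : ℝ)
    (hf : ∀ z, HasDerivAt f (f' z) z) (hf' : ∀ z, HasDerivAt f' (f'' z) z)
    (hode : ∀ z, b ^ 2 * f'' z + b * c * f' z + F (f z) = 0) (t x : ℝ) :
    deriv (fun s => f (b * (x - c * s))) t
      = deriv (fun y => deriv (fun z => f (b * (z - c * t))) y) x + F (f (b * (x - c * t))) := by
  have htime : HasDerivAt (fun s => f (b * (x - c * s))) (f' (b * (x - c * t)) * -(b * c)) t :=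
    (hf _).comp t (by simpa using (((hasDerivAt_id t).const_mul c).const_sub x).const_mul b)
  have hphase : ∀ y, HasDerivAt (fun y => b * (y - c * t)) b y := fun y => by
    simpa using ((hasDerivAt_id y).sub_const (c * t)).const_mul b
  have hspace : deriv (fun z => f (b * (z - c * t))) = fun y => f' (b * (y - c * t)) * b :=
    funext fun y => ((hf _).comp y (hphase y)).deriv
  have hspace' : HasDerivAt (fun y => f' (b * (y - c * t)) * b)
      (f'' (b * (x - c * t)) * b * b) x :=
    ((hf' _).comp x (hphase x)).mul_const b
  rw [htime.deriv, hspace, hspace'.deriv]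
  linear_combination -hode (b * (x - c * t))

theorem fisher_front_ode {m p b c : ℝ} (hm : m + 1 ≠ 0) (hp : p * (m - 1) = 2)
    (hb : b ^ 2 = (m - 1) ^ 2 / (2 * m + 2)) (hbc : b * c = (m - 1) * (m + 3) / (2 * m + 2))
    (z : ℝ) :
    b ^ 2 * (-p * (1 + exp z) ^ (-p - 2) * exp z * (1 + -p * exp z))
      + b * c * (-p * (1 + exp z) ^ (-p - 1) * exp z)
      + ((1 + exp z) ^ (-p) - ((1 + exp z) ^ (-p)) ^ m) = 0 := by
  have hU : 0 < 1 + exp z := by positivity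
  have hpm : -p * m = -p - 2 := by linear_combination -hp
  have hsucc : ∀ q : ℝ, (1 + exp z) ^ (q + 1) = (1 + exp z) ^ q * (1 + exp z) := fun q => by
    rw [rpow_add hU, rpow_one]
  have h1 : (1 + exp z) ^ (-p - 1) = (1 + exp z) ^ (-p - 2) * (1 + exp z) := by
    rw [← hsucc]; ring_nf
  have h0 : (1 + exp z) ^ (-p) = (1 + exp z) ^ (-p - 2) * (1 + exp z) * (1 + exp z) := by
    rw [← h1, ← hsucc]; ring_nf
  rw [← rpow_mul hU.le, hpm, h0, h1, hb, hbc]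
  have hm2 : 2 * m + 2 ≠ 0 := by contrapose! hm; linarith
  field_simp
  linear_combination
    (1 + exp z) ^ (-p - 2) * exp z * ((p * (m - 1) - m - 1) * exp z - 2 * (m + 1)) * hp

/-- Tanh-form of the traveling-wave solution (54) of the generalized Fisher
equation `v_t = v_{xx} + v − v^m`. -/
theorem fisher_tanh_solution
    (m : ℝ) (hm : 1 < m)
    (v : ℝ → ℝ → ℝ)
    (hv : ∀ t x : ℝ,
      v t x = (1 / 2 - 1 / 2 * Real.tanh ((m - 1) / (2 * Real.sqrt (2 * m + 2))
        * (x - (m + 3) * t / Real.sqrt (2 * m + 2)))) ^ (2 / (m - 1))) :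
    ∀ t x : ℝ,
      deriv (fun s => v s x) t
        = deriv (fun y => deriv (fun z => v t z) y) x + v t x - v t x ^ m := by
  have hs : √(2 * m + 2) ^ 2 = 2 * m + 2 := sq_sqrt (by linarith)
  have hs0 : √(2 * m + 2) ≠ 0 := by positivity
  set p := 2 / (m - 1)
  set b := (m - 1) / √(2 * m + 2)
  set c := (m + 3) / √(2 * m + 2)
  have hp : p * (m - 1) = 2 := div_mul_cancel₀ 2 (by linarith)
  have hb : b ^ 2 = (m - 1) ^ 2 / (2 * m + 2) := by rw [div_pow, hs]
  have hbc : b * c = (m - 1) * (m + 3) / (2 * m + 2) := by rw [div_mul_div_comm, ← sq, hs]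
  have hfront : v = fun t x => (1 + exp (b * (x - c * t))) ^ (-p) := by
    funext t x
    rw [hv, one_half_sub_half_mul_tanh, inv_rpow (by positivity), ← rpow_neg (by positivity)]
    congr 3
    simp only [b, c]
    field_simp
  subst hfront
  intro t x
  rw [add_sub_assoc]
  exact travelingWave_solves (fun y => y - y ^ m) b c (hasDerivAt_one_add_exp_rpow (-p))
    (hasDerivAt_deriv_one_add_exp_rpow (-p))
    (fisher_front_ode (by linarith : 0 < m + 1).ne' hp hb hbc) t x
end

section
/- Scale-invariant rational solution (73) of the cubic heat equation. The function v(t,x) = 2√2·x/(x² + 6t) satisfies v_t(t,x) = v_{xx}(t,x) − v(t,x)³ at every point (t,x) of any open subset of ℝ×ℝ on which x² + 6t ≠ 0. -/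
/-! With `D = x² + 6t` and `v = c x / D` one computes `v_t = -6cx / D²`,
`v_xx = 2cx (x² - 18t) / D³` and `v³ = c³x³ / D³`, so the equation reduces to the
polynomial identity `-6D = 2(x² - 18t) - c²x²`, which holds exactly when `c² = 8`. -/

section RationalProfile

variable (a c : ℝ)

lemma hasDerivAt_mul_div_sq_add {y : ℝ} (hy : y ^ 2 + a ≠ 0) :
    HasDerivAt (fun z => c * z / (z ^ 2 + a)) (c * (a - y ^ 2) / (y ^ 2 + a) ^ 2) y := by
  have hnum : HasDerivAt (fun z => c * z) c y := by
    simpa using (hasDerivAt_id y).const_mul c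
  have hden : HasDerivAt (fun z => z ^ 2 + a) (2 * y) y := by
    simpa using (hasDerivAt_pow 2 y).add_const a
  exact (hnum.fun_div hden hy).congr_deriv (by ring)

lemma hasDerivAt_mul_sub_sq_div_sq_add_sq {y : ℝ} (hy : y ^ 2 + a ≠ 0) :
    HasDerivAt (fun z => c * (a - z ^ 2) / (z ^ 2 + a) ^ 2)
      (2 * c * y * (y ^ 2 - 3 * a) / (y ^ 2 + a) ^ 3) y := by
  have hnum : HasDerivAt (fun z => c * (a - z ^ 2)) (c * -(2 * y)) y := by
    simpa using ((hasDerivAt_pow 2 y).const_sub a).const_mul c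
  have hden : HasDerivAt (fun z => (z ^ 2 + a) ^ 2) (2 * (y ^ 2 + a) * (2 * y)) y := by
    simpa using ((hasDerivAt_pow 2 y).add_const a).fun_pow 2
  refine (hnum.fun_div hden (pow_ne_zero 2 hy)).congr_deriv ?_
  field_simp
  ring

lemma deriv_deriv_mul_div_sq_add {x : ℝ} (hx : x ^ 2 + a ≠ 0) :
    deriv (fun y => deriv (fun z => c * z / (z ^ 2 + a)) y) x
      = 2 * c * x * (x ^ 2 - 3 * a) / (x ^ 2 + a) ^ 3 := by
  have hopen : IsOpen {y : ℝ | y ^ 2 + a ≠ 0} := isOpen_ne.preimage (by fun_prop)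
  have hfirst : (fun y => deriv (fun z => c * z / (z ^ 2 + a)) y)
      =ᶠ[nhds x] fun y => c * (a - y ^ 2) / (y ^ 2 + a) ^ 2 := by
    filter_upwards [hopen.mem_nhds hx] with y hy
    exact (hasDerivAt_mul_div_sq_add a c hy).deriv
  rw [hfirst.deriv_eq, (hasDerivAt_mul_sub_sq_div_sq_add_sq a c hx).deriv]

end RationalProfile

lemma hasDerivAt_div_add_mul (b d k : ℝ) {t : ℝ} (ht : d + k * t ≠ 0) :
    HasDerivAt (fun s => b / (d + k * s)) (-(b * k) / (d + k * t) ^ 2) t := by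
  have hden : HasDerivAt (fun s => d + k * s) k t := by
    simpa using ((hasDerivAt_id t).const_mul k).const_add d
  exact ((hasDerivAt_const t b).fun_div hden ht).congr_deriv (by ring)

theorem cubic_heat_of_sq_eq_eight {c : ℝ} (hc : c ^ 2 = 8) {t x : ℝ} (hD : x ^ 2 + 6 * t ≠ 0) :
    deriv (fun s => c * x / (x ^ 2 + 6 * s)) t
      = deriv (fun y => deriv (fun z => c * z / (z ^ 2 + 6 * t)) y) x
        - (c * x / (x ^ 2 + 6 * t)) ^ 3 := by
  rw [(hasDerivAt_div_add_mul (c * x) (x ^ 2) 6 hD).deriv, deriv_deriv_mul_div_sq_add _ _ hD]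
  field_simp
  rw [hc]
  ring

/-- Scale-invariant rational solution (73) of the cubic heat equation
`v_t = v_{xx} − v³`. -/
theorem cubic_heat_rational_solution
    (v : ℝ → ℝ → ℝ)
    (hv : ∀ t x : ℝ, v t x = 2 * Real.sqrt 2 * x / (x ^ 2 + 6 * t)) :
    ∀ t x : ℝ, x ^ 2 + 6 * t ≠ 0 →
      deriv (fun s => v s x) t
        = deriv (fun y => deriv (fun z => v t z) y) x - v t x ^ 3 := by
  have hc : (2 * Real.sqrt 2) ^ 2 = 8 := by
    rw [mul_pow, Real.sq_sqrt (by norm_num)]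
    norm_num
  obtain rfl : v = fun t x => 2 * Real.sqrt 2 * x / (x ^ 2 + 6 * t) := funext₂ hv
  exact fun t x hD => cubic_heat_of_sq_eq_eight hc hD
end

section
/- Trigonometric non-Lie solution of the cubic heat equation with linear sink (case δ=−1, ε=−1 of the appendix). Let C2 be a real constant. Then the function v(t,x) = sin( x/√2 ) / ( C2·e^{3t/2} + cos( x/√2 ) ) satisfies v_t(t,x) = v_{xx}(t,x) − v(t,x)³ − v(t,x) at every point (t,x) of any open subset of ℝ×ℝ on which C2·e^{3t/2} + cos( x/√2 ) ≠ 0. -/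
/-!
For any frequency `μ`, the profile `u = sin (μ x) / (A + cos (μ x))` has, thanks to
`sin² + cos² = 1`, the `x`-derivative `μ (A cos (μ x) + 1) / (A + cos (μ x))²`. Letting the
amplitude grow as `A(t) = C e^{3 μ² t}`, a direct computation gives
`u_t = u_xx - 2 μ² (u³ + u)`; at `μ = 1/√2` this is the equation `v_t = v_xx - v³ - v`.
-/

open Real Filter Topology

noncomputable def trigProfile (μ A y : ℝ) : ℝ := sin (μ * y) / (A + cos (μ * y))

section

variable (μ : ℝ)

lemma hasDerivAt_trigProfile_amplitude {A y : ℝ} (h : A + cos (μ * y) ≠ 0) :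
    HasDerivAt (fun B => trigProfile μ B y) (-sin (μ * y) / (A + cos (μ * y)) ^ 2) A := by
  refine ((hasDerivAt_const A _).fun_div ((hasDerivAt_id' A).add_const _) h).congr_deriv ?_
  ring

lemma hasDerivAt_trigProfile {A y : ℝ} (h : A + cos (μ * y) ≠ 0) :
    HasDerivAt (trigProfile μ A) (μ * (A * cos (μ * y) + 1) / (A + cos (μ * y)) ^ 2) y := by
  have hlin : HasDerivAt (μ * ·) μ y := hasDerivAt_const_mul μ
  refine ((hlin.sin).fun_div ((hlin.cos).const_add A) h).congr_deriv ?_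
  linear_combination μ * sin_sq_add_cos_sq (μ * y) / (A + cos (μ * y)) ^ 2

lemma deriv_trigProfile_eventuallyEq {A x : ℝ} (h : A + cos (μ * x) ≠ 0) :
    deriv (trigProfile μ A) =ᶠ[𝓝 x]
      fun y => μ * (A * cos (μ * y) + 1) / (A + cos (μ * y)) ^ 2 := by
  have hcont : ContinuousAt (fun y => A + cos (μ * y)) x := by fun_prop
  filter_upwards [hcont.eventually_ne h] with y hy using (hasDerivAt_trigProfile μ hy).deriv

lemma hasDerivAt_deriv_trigProfile {A x : ℝ} (h : A + cos (μ * x) ≠ 0) :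
    HasDerivAt (deriv (trigProfile μ A))
      (μ ^ 2 * sin (μ * x) * (2 + A * cos (μ * x) - A ^ 2) / (A + cos (μ * x)) ^ 3) x := by
  have hlin : HasDerivAt (μ * ·) μ x := hasDerivAt_const_mul μ
  have hquot := ((((hlin.cos).const_mul A).add_const 1).const_mul μ).fun_div
    (((hlin.cos).const_add A).fun_pow 2) (pow_ne_zero 2 h)
  refine (hquot.congr_of_eventuallyEq (deriv_trigProfile_eventuallyEq μ h)).congr_deriv ?_
  field_simp
  ring

lemma hasDerivAt_trigProfile_time {C t x : ℝ}
    (h : C * exp (3 * μ ^ 2 * t) + cos (μ * x) ≠ 0) :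
    HasDerivAt (fun s => trigProfile μ (C * exp (3 * μ ^ 2 * s)) x)
      (-sin (μ * x) / (C * exp (3 * μ ^ 2 * t) + cos (μ * x)) ^ 2
        * (3 * μ ^ 2 * (C * exp (3 * μ ^ 2 * t)))) t := by
  have hA : HasDerivAt (fun s => C * exp (3 * μ ^ 2 * s))
      (3 * μ ^ 2 * (C * exp (3 * μ ^ 2 * t))) t :=
    ((hasDerivAt_const_mul (3 * μ ^ 2)).exp.const_mul C).congr_deriv (by ring)
  exact (hasDerivAt_trigProfile_amplitude μ h).comp (h₂ := fun B => trigProfile μ B x) t hA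

theorem trigProfile_solves_heat {C t x : ℝ} (h : C * exp (3 * μ ^ 2 * t) + cos (μ * x) ≠ 0) :
    deriv (fun s => trigProfile μ (C * exp (3 * μ ^ 2 * s)) x) t
      = deriv (deriv (trigProfile μ (C * exp (3 * μ ^ 2 * t)))) x
        - 2 * μ ^ 2 * (trigProfile μ (C * exp (3 * μ ^ 2 * t)) x ^ 3
          + trigProfile μ (C * exp (3 * μ ^ 2 * t)) x) := by
  rw [(hasDerivAt_trigProfile_time μ h).deriv, (hasDerivAt_deriv_trigProfile μ h).deriv,
    trigProfile]
  set A := C * exp (3 * μ ^ 2 * t)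
  field_simp
  linear_combination (2 * μ ^ 2 * sin (μ * x)) * sin_sq_add_cos_sq (μ * x)

end

/-- Trigonometric non-Lie solution of the cubic heat equation with linear sink
`v_t = v_{xx} − v³ − v` (case δ = −1, ε = −1 of the appendix). -/
theorem cubic_heat_trig_solution
    (C2 : ℝ)
    (v : ℝ → ℝ → ℝ)
    (hv : ∀ t x : ℝ,
      v t x = Real.sin (x / Real.sqrt 2)
        / (C2 * Real.exp (3 * t / 2) + Real.cos (x / Real.sqrt 2))) :
    ∀ t x : ℝ, C2 * Real.exp (3 * t / 2) + Real.cos (x / Real.sqrt 2) ≠ 0 →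
      deriv (fun s => v s x) t
        = deriv (fun y => deriv (fun z => v t z) y) x - v t x ^ 3 - v t x := by
  intro t x h
  have hμ : ((√2)⁻¹) ^ 2 = (1 / 2 : ℝ) := by simp
  have hfreq (y : ℝ) : y / √2 = (√2)⁻¹ * y := div_eq_inv_mul y _
  have hrate (s : ℝ) : 3 * s / 2 = 3 * ((√2)⁻¹) ^ 2 * s := by rw [hμ]; ring
  simp only [hfreq, hrate] at hv h
  obtain rfl : v = fun t x => trigProfile (√2)⁻¹ (C2 * exp (3 * ((√2)⁻¹) ^ 2 * t)) x :=
    funext fun t => funext (hv t)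
  rw [trigProfile_solves_heat _ h, hμ]
  ring
end

section
/- Riccati-parametrized solutions of the double-imaged class, cases 1 and 2 of its classification. Let δ ≠ 0 and q, b1 be real constants, set Δ = q⁴/4 − δ·b1, let J ⊆ ℝ be an open interval and let χ: J → ℝ be a differentiable function satisfying the Riccati equation χ'(t) = Δ − χ(t)² for all t ∈ J. Then the function w(t,x) = −( q² + 2χ(t) )·e^{−qx}/(2δ) satisfies w_t(t,x) = w_{xx}(t,x) + δ·e^{qx}·w(t,x)² + b1·e^{−qx} for all (t,x) ∈ J×ℝ. -/
open Real Set

/-!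
Separating variables as `w t x = a t * e^{-qx}` turns the equation
`w_t = w_xx + δ e^{qx} w² + b₁ e^{-qx}` into the scalar ODE `a' = q² a + δ a² + b₁`,
because `e^{-qx}` is an eigenfunction of `∂ₓ²` with eigenvalue `q²` and
`e^{qx} (e^{-qx})² = e^{-qx}`. The affine substitution `a = -(q² + 2χ) / (2δ)` completes the
square in this Riccati equation and turns it into `χ' = Δ - χ²` with `Δ = q⁴/4 - δ b₁`.
-/

lemma deriv_const_mul_exp_neg_mul (c q y : ℝ) :
    deriv (fun z => c * exp (-(q * z))) y = -q * c * exp (-(q * y)) := by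
  have h : HasDerivAt (fun z => c * exp (-(q * z))) (c * (exp (-(q * y)) * -q)) y := by
    simpa using (((hasDerivAt_id y).const_mul q).neg.exp).const_mul c
  rw [h.deriv]
  ring

lemma deriv_deriv_const_mul_exp_neg_mul (c q x : ℝ) :
    deriv (fun y => deriv (fun z => c * exp (-(q * z))) y) x = q ^ 2 * c * exp (-(q * x)) := by
  simp_rw [deriv_const_mul_exp_neg_mul c q, deriv_const_mul_exp_neg_mul (-q * c) q]
  ring

lemma exp_mul_mul_exp_neg_mul_sq (δ a q x : ℝ) :
    δ * exp (q * x) * (a * exp (-(q * x))) ^ 2 = δ * a ^ 2 * exp (-(q * x)) := by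
  have h : exp (q * x) * exp (-(q * x)) = 1 := by rw [← exp_add, add_neg_cancel, exp_zero]
  linear_combination δ * a ^ 2 * exp (-(q * x)) * h

lemma deriv_mul_exp_neg_mul_eq_of_hasDerivAt {a : ℝ → ℝ} {δ q b t : ℝ}
    (ha : HasDerivAt a (q ^ 2 * a t + δ * a t ^ 2 + b) t) (x : ℝ) :
    deriv (fun s => a s * exp (-(q * x))) t
      = deriv (fun y => deriv (fun z => a t * exp (-(q * z))) y) x
        + δ * exp (q * x) * (a t * exp (-(q * x))) ^ 2 + b * exp (-(q * x)) := by
  rw [(ha.mul_const _).deriv, deriv_deriv_const_mul_exp_neg_mul, exp_mul_mul_exp_neg_mul_sq]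
  ring

lemma hasDerivAt_riccati_amplitude {χ : ℝ → ℝ} {δ q b₁ t : ℝ} (hδ : δ ≠ 0)
    (hχ : HasDerivAt χ (q ^ 4 / 4 - δ * b₁ - χ t ^ 2) t) :
    HasDerivAt (fun s => -((q ^ 2 + 2 * χ s) / (2 * δ)))
      (q ^ 2 * -((q ^ 2 + 2 * χ t) / (2 * δ)) + δ * (-((q ^ 2 + 2 * χ t) / (2 * δ))) ^ 2 + b₁)
      t := by
  refine (((hχ.const_mul 2).const_add (q ^ 2)).div_const (2 * δ)).neg.congr_deriv ?_
  field_simp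
  ring

theorem double_imaged_riccati_solutions_general
    (δ q b1 : ℝ) (hδ : δ ≠ 0)
    (Δ : ℝ) (hΔ : Δ = q ^ 4 / 4 - δ * b1)
    (J : Set ℝ)
    (χ : ℝ → ℝ)
    (hχ : ∀ t ∈ J, HasDerivAt χ (Δ - χ t ^ 2) t)
    (w : ℝ → ℝ → ℝ)
    (hw : ∀ t x : ℝ,
      w t x = -((q ^ 2 + 2 * χ t) * Real.exp (-(q * x)) / (2 * δ))) :
    ∀ t ∈ J, ∀ x : ℝ,
      deriv (fun s => w s x) t
        = deriv (fun y => deriv (fun z => w t z) y) x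
          + δ * Real.exp (q * x) * w t x ^ 2 + b1 * Real.exp (-(q * x)) := by
  intro t ht x
  have hw' : w = fun s z => -((q ^ 2 + 2 * χ s) / (2 * δ)) * exp (-(q * z)) := by
    ext s z
    rw [hw]
    ring
  subst hw' hΔ
  exact deriv_mul_exp_neg_mul_eq_of_hasDerivAt (hasDerivAt_riccati_amplitude hδ (hχ t ht)) x

/-- Riccati-parametrized solutions of the double-imaged class, cases 1 and 2 of
its classification. -/
theorem double_imaged_riccati_solutions
    (δ q b1 : ℝ) (hδ : δ ≠ 0)
    (Δ : ℝ) (hΔ : Δ = q ^ 4 / 4 - δ * b1)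
    (J : Set ℝ) (hJ : IsOpen J) (hJc : J.OrdConnected)
    (χ : ℝ → ℝ)
    (hχ : ∀ t ∈ J, HasDerivAt χ (Δ - χ t ^ 2) t)
    (w : ℝ → ℝ → ℝ)
    (hw : ∀ t x : ℝ,
      w t x = -((q ^ 2 + 2 * χ t) * Real.exp (-(q * x)) / (2 * δ))) :
    ∀ t ∈ J, ∀ x : ℝ,
      deriv (fun s => w s x) t
        = deriv (fun y => deriv (fun z => w t z) y) x
          + δ * Real.exp (q * x) * w t x ^ 2 + b1 * Real.exp (-(q * x)) :=
  double_imaged_riccati_solutions_general δ q b1 hδ Δ hΔ J χ hχ w hw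
end
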